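/- arXiv:2210.17480 — 2 statements merged into one kernel-verified Lean document; each statement's English description precedes it below -/
import Mathlib

section
/- Let (X,d) be a proper geodesic Gromov hyperbolic metric space, f : X → X a non-expanding map, and η ∈ ∂_G X a repelling boundary regular fixed point of f (stable dilation Λ_η > 1). If (x_n) and (y_n) are two backward orbits of f with bounded step, both converging to η in the Gromov compactification, then sup_{n≥0} d(x_n,y_n) < +∞. -/
/- Preliminary definitions: Gromov hyperbolicity, Gromov boundary (via geodesic rays),
   dilations, boundary regular fixed points, horofunctions, backward orbits. -/

noncomputable section

open Filter Topology Metric Set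

/-- The Gromov product of `x` and `y` with respect to the base point `p`. -/
def gromovProd {X : Type*} [MetricSpace X] (p x y : X) : ℝ :=
  (dist p x + dist p y - dist x y) / 2

/-- A (unit speed) geodesic ray, parametrized by `t ≥ 0`. -/
def IsGeodesicRay {X : Type*} [MetricSpace X] (γ : ℝ → X) : Prop :=
  ∀ s t : ℝ, 0 ≤ s → 0 ≤ t → dist (γ s) (γ t) = |s - t|

/-- A (unit speed) geodesic segment from `x` to `y`, parametrized on `[0, dist x y]`. -/
def IsGeodesicFromTo {X : Type*} [MetricSpace X] (γ : ℝ → X) (x y : X) : Prop :=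
  γ 0 = x ∧ γ (dist x y) = y ∧
    ∀ s t : ℝ, s ∈ Set.Icc 0 (dist x y) → t ∈ Set.Icc 0 (dist x y) →
      dist (γ s) (γ t) = |s - t|

/-- A geodesic metric space: any two points are joined by a geodesic. -/
def IsGeodesicSpace (X : Type*) [MetricSpace X] : Prop :=
  ∀ x y : X, ∃ γ : ℝ → X, IsGeodesicFromTo γ x y

/-- `δ`-hyperbolicity via slim triangles: every side of every geodesic triangle is contained
in the `δ`-neighborhood of the union of the other two sides. -/
def IsDeltaHyperbolic (X : Type*) [MetricSpace X] (δ : ℝ) : Prop :=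
  ∀ x y z : X, ∀ α β γ : ℝ → X,
    IsGeodesicFromTo α x y → IsGeodesicFromTo β y z → IsGeodesicFromTo γ x z →
    ∀ t ∈ Set.Icc (0 : ℝ) (dist x z),
      ∃ u ∈ α '' Set.Icc 0 (dist x y) ∪ β '' Set.Icc 0 (dist y z), dist (γ t) u ≤ δ

/-- A Gromov hyperbolic space: `δ`-hyperbolic for some `δ ≥ 0`. -/
def GromovHyperbolic (X : Type*) [MetricSpace X] : Prop :=
  ∃ δ : ℝ, 0 ≤ δ ∧ IsDeltaHyperbolic X δ

/-- The trace on `X` of the filter of neighborhoods, in the Gromov compactification, of the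
boundary point determined by the geodesic ray `γ`: a sequence (or a function) converges to
the boundary point `[γ]` iff its Gromov products with points far along `γ` tend to `+∞`. -/
def gromovFilter {X : Type*} [MetricSpace X] (γ : ℝ → X) : Filter X :=
  ⨅ M : ℝ, Filter.principal
    {x | M ≤ Filter.liminf (fun t : ℝ => gromovProd (γ 0) x (γ t)) Filter.atTop}

/-- Two geodesic rays are asymptotic, i.e. they determine the same point of the
Gromov boundary. -/
def AsympRays {X : Type*} [MetricSpace X] (γ σ : ℝ → X) : Prop :=
  ∃ C : ℝ, ∀ t : ℝ, 0 ≤ t → dist (γ t) (σ t) ≤ C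

/-- A non-expanding (1-Lipschitz) map. -/
def Nonexpanding {X : Type*} [MetricSpace X] (f : X → X) : Prop :=
  ∀ x y : X, dist (f x) (f y) ≤ dist x y

/-- Membership in the geodesic region `A(σ, R)` with vertex `[σ]`. -/
def InGeodesicRegion {X : Type*} [MetricSpace X] (σ : ℝ → X) (R : ℝ) (x : X) : Prop :=
  ∃ t : ℝ, 0 ≤ t ∧ dist x (σ t) < R

/-- `f` has geodesic limit `[ξ]` at the boundary point `[γ]`: for every sequence converging
to `[γ]` inside a geodesic region with vertex `[γ]`, the image sequence converges to `[ξ]`. -/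
def HasGeodesicLimitAt {X : Type*} [MetricSpace X] (f : X → X) (γ ξ : ℝ → X) : Prop :=
  ∀ σ : ℝ → X, IsGeodesicRay σ → AsympRays γ σ → ∀ R : ℝ, 0 < R →
    ∀ x : ℕ → X, (∀ n, InGeodesicRegion σ R (x n)) →
      Filter.Tendsto x Filter.atTop (gromovFilter γ) →
      Filter.Tendsto (fun n => f (x n)) Filter.atTop (gromovFilter ξ)

/-- `log λ_{η,p}(f)`, the logarithm of the dilation of `f` at the boundary point `η = [γ]`
with respect to the base point `p`, as an extended real number:
`log λ_{η,p}(f) = liminf_{x → η} (d(x,p) - d(f(x),p))`. -/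
def logDilation {X : Type*} [MetricSpace X] (p : X) (γ : ℝ → X) (f : X → X) : EReal :=
  Filter.liminf (fun x => ((dist x p - dist (f x) p : ℝ) : EReal)) (gromovFilter γ)

/-- The dilation of `f` at `[γ]` w.r.t. `p` is finite with logarithm the real number `L`. -/
def HasLogDilation {X : Type*} [MetricSpace X] (p : X) (γ : ℝ → X) (f : X → X) (L : ℝ) : Prop :=
  logDilation p γ f = (L : EReal)

/-- The point `[γ]` of the Gromov boundary is a boundary regular fixed point (BRFP) of `f`:
the dilation at `[γ]` is finite and `f` has geodesic limit `[γ]` at `[γ]`. -/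
def IsBRFP {X : Type*} [MetricSpace X] (f : X → X) (γ : ℝ → X) : Prop :=
  IsGeodesicRay γ ∧ logDilation (γ 0) γ f ≠ ⊤ ∧ HasGeodesicLimitAt f γ γ

/-- The stable dilation of `f` at the BRFP `[γ]` has logarithm `L`:
`log Λ_η = lim_n (1/n) log λ_{η,p}(f^n)`. -/
def HasStableLogDilation {X : Type*} [MetricSpace X] (p : X) (γ : ℝ → X) (f : X → X)
    (L : ℝ) : Prop :=
  ∃ l : ℕ → ℝ, (∀ n : ℕ, 1 ≤ n → HasLogDilation p γ (f^[n]) (l n)) ∧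
    Filter.Tendsto (fun n : ℕ => l n / n) Filter.atTop (nhds L)

/-- A backward orbit of `f`. -/
def IsBackwardOrbit {X : Type*} (f : X → X) (x : ℕ → X) : Prop :=
  ∀ n : ℕ, f (x (n + 1)) = x n

/-- A sequence has bounded step. -/
def BoundedStep {X : Type*} [MetricSpace X] (x : ℕ → X) : Prop :=
  ∃ S : ℝ, ∀ n : ℕ, dist (x n) (x (n + 1)) ≤ S

/-- The backward step rate of a backward orbit with bounded step equals `b`:
`σ_m = lim_n d(x_{n+m}, x_n)` exists for each `m`, and `b = lim_m σ_m / m`. -/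
def HasBackwardStepRate {X : Type*} [MetricSpace X] (x : ℕ → X) (b : ℝ) : Prop :=
  ∃ σ : ℕ → ℝ,
    (∀ m : ℕ, Filter.Tendsto (fun n : ℕ => dist (x (n + m)) (x n)) Filter.atTop (nhds (σ m))) ∧
    Filter.Tendsto (fun m : ℕ => σ m / m) Filter.atTop (nhds b)

/-- `f` is elliptic: some (equivalently, every) forward orbit is bounded. -/
def IsElliptic {X : Type*} [MetricSpace X] (f : X → X) : Prop :=
  ∃ x : X, Bornology.IsBounded (Set.range fun n : ℕ => f^[n] x)

/-- The limit retract `ω_f`: the union of all ω-limit sets of forward orbits of `f`. -/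
def limitRetract {X : Type*} [MetricSpace X] (f : X → X) : Set X :=
  ⋃ x : X,
    {y | ∃ φ : ℕ → ℕ, StrictMono φ ∧ Filter.Tendsto (fun k => f^[φ k] x) Filter.atTop (nhds y)}

/-- `f` is weakly elliptic: elliptic with non-compact limit retract. -/
def WeaklyElliptic {X : Type*} [MetricSpace X] (f : X → X) : Prop :=
  IsElliptic f ∧ ¬ IsCompact (limitRetract f)

/-- The divergence rate (translation length) of `f` equals `c`:
`c(f) = lim_n d(x, f^n(x))/n` for every `x`. -/
def HasDivergenceRate {X : Type*} [MetricSpace X] (f : X → X) (c : ℝ) : Prop :=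
  ∀ x : X, Filter.Tendsto (fun n : ℕ => dist x (f^[n] x) / n) Filter.atTop (nhds c)

/-- `[γ]` is the Denjoy–Wolff point of `f`: every forward orbit converges to `[γ]`. -/
def IsDenjoyWolffPt {X : Type*} [MetricSpace X] (f : X → X) (γ : ℝ → X) : Prop :=
  IsGeodesicRay γ ∧
    ∀ x : X, Filter.Tendsto (fun n : ℕ => f^[n] x) Filter.atTop (gromovFilter γ)

/-- `h = h_{a,p}` is a horofunction normalized at `p` (`h(p) = 0`): a limit, along an escaping
sequence `w`, of the functions `y ↦ d(w_n, y) - d(w_n, p)`. -/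
def IsHorofunctionAt {X : Type*} [MetricSpace X] (p : X) (h : X → ℝ) : Prop :=
  h p = 0 ∧ ∃ w : ℕ → X, Filter.Tendsto (fun n => dist p (w n)) Filter.atTop Filter.atTop ∧
    ∀ y : X, Filter.Tendsto (fun n => dist (w n) y - dist (w n) p) Filter.atTop (nhds (h y))

/-- The horofunction class of `h` (a point `a ∈ ∂_H X`) projects under the canonical map
`Φ : X̄^H → X̄^G` to the Gromov boundary point `[γ]`, i.e. `a ∈ Φ⁻¹([γ])`. -/
def HoroProjectsTo {X : Type*} [MetricSpace X] (p : X) (h : X → ℝ) (γ : ℝ → X) : Prop :=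
  ∃ w : ℕ → X, Filter.Tendsto (fun n => dist p (w n)) Filter.atTop Filter.atTop ∧
    (∀ y : X, Filter.Tendsto (fun n => dist (w n) y - dist (w n) p) Filter.atTop (nhds (h y))) ∧
    Filter.Tendsto w Filter.atTop (gromovFilter γ)

/-- The horofunction compactification is equivalent to the Gromov compactification:
the canonical continuous map `Φ : X̄^H → X̄^G` is injective (hence a homeomorphism). -/
def CompactificationsEquivalent (X : Type*) [MetricSpace X] : Prop :=
  ∀ (p : X) (h₁ h₂ : X → ℝ), IsHorofunctionAt p h₁ → IsHorofunctionAt p h₂ →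
    (∃ γ : ℝ → X, IsGeodesicRay γ ∧ HoroProjectsTo p h₁ γ ∧ HoroProjectsTo p h₂ γ) → h₁ = h₂

/-- An escaping sequence: it eventually leaves every compact subset. -/
def Escaping {X : Type*} [TopologicalSpace X] (x : ℕ → X) : Prop :=
  ∀ K : Set X, IsCompact K → ∀ᶠ n in Filter.atTop, x n ∉ K

/-- A discrete quasi-geodesic. -/
def DiscreteQuasiGeodesic {X : Type*} [MetricSpace X] (x : ℕ → X) : Prop :=
  ∃ A B : ℝ, 1 ≤ A ∧ 0 ≤ B ∧ ∀ n m : ℕ,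
    A⁻¹ * |(n : ℝ) - (m : ℝ)| - B ≤ dist (x n) (x m) ∧
      dist (x n) (x m) ≤ A * |(n : ℝ) - (m : ℝ)| + B

/-- An almost geodesic curve. -/
def IsAlmostGeodesic {X : Type*} [MetricSpace X] (α : ℝ → X) : Prop :=
  ∀ ε : ℝ, 0 < ε → ∃ T : ℝ, 0 ≤ T ∧ ∀ t₁ t₂ : ℝ, T ≤ t₁ → T ≤ t₂ →
    |t₁ - t₂| - ε ≤ dist (α t₁) (α t₂) ∧ dist (α t₁) (α t₂) ≤ |t₁ - t₂|

end
noncomputable section Aux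
open Filter Topology Metric Set

variable {X : Type*} [MetricSpace X]

lemma gromovProd_def (p a b : X) : gromovProd p a b = (dist p a + dist p b - dist a b)/2 := rfl

lemma gromovProd_nonneg (p a b : X) : 0 ≤ gromovProd p a b := by
  rw [gromovProd_def]
  linarith [dist_triangle a p b, dist_comm a p]

lemma IsGeodesicFromTo.dist_left {g : ℝ → X} {a b : X} (hg : IsGeodesicFromTo g a b)
    {t : ℝ} (ht : t ∈ Set.Icc 0 (dist a b)) : dist a (g t) = t := by
  have h0 : (0:ℝ) ∈ Set.Icc 0 (dist a b) := ⟨le_refl 0, dist_nonneg⟩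
  have h := hg.2.2 0 t h0 ht
  rw [hg.1] at h
  rw [h, zero_sub, abs_neg, abs_of_nonneg ht.1]

lemma IsGeodesicFromTo.dist_right {g : ℝ → X} {a b : X} (hg : IsGeodesicFromTo g a b)
    {t : ℝ} (ht : t ∈ Set.Icc 0 (dist a b)) : dist (g t) b = dist a b - t := by
  have h1 : dist a b ∈ Set.Icc 0 (dist a b) := ⟨dist_nonneg, le_refl _⟩
  have h := hg.2.2 t (dist a b) ht h1
  rw [hg.2.1] at h
  rw [h, abs_of_nonpos (by linarith [ht.2]), neg_sub]

/-- Points on a geodesic from `a` to `b` are at distance at least `(a·b)_p` from `p`. -/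
lemma gromovProd_le_dist_geodesic {g : ℝ → X} {a b : X} (hg : IsGeodesicFromTo g a b)
    {t : ℝ} (ht : t ∈ Set.Icc 0 (dist a b)) (p : X) : gromovProd p a b ≤ dist p (g t) := by
  have h2 := hg.dist_left ht
  have h4 := hg.dist_right ht
  rw [gromovProd_def]
  linarith [dist_triangle p (g t) a, dist_triangle p (g t) b,
    dist_comm (g t) a, dist_comm (g t) b]

/-- Four-point inequality from slim triangles. -/
lemma four_point (hgeo : IsGeodesicSpace X) {δ : ℝ} (hδ : 0 ≤ δ)
    (hslim : IsDeltaHyperbolic X δ) (p a b w : X) :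
    min (gromovProd p a w) (gromovProd p w b) - 3 * δ ≤ gromovProd p a b := by
  obtain ⟨c, hc⟩ := hgeo a b
  have ht₀ : gromovProd a b p ∈ Set.Icc 0 (dist a b) := by
    refine ⟨gromovProd_nonneg a b p, ?_⟩
    rw [gromovProd_def]
    linarith [dist_triangle a b p, dist_comm b p]
  set t₀ : ℝ := gromovProd a b p with ht₀def
  have hat : dist a (c t₀) = t₀ := hc.dist_left ht₀
  have hbt : dist (c t₀) b = dist a b - t₀ := hc.dist_right ht₀
  have ht₀eq : t₀ = (dist a b + dist a p - dist b p)/2 := gromovProd_def a b p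
  -- step (b): dist p (c t₀) ≤ gromovProd p a b + 2δ
  have hb : dist p (c t₀) ≤ gromovProd p a b + 2 * δ := by
    obtain ⟨α, hα⟩ := hgeo a p
    obtain ⟨β, hβ⟩ := hgeo p b
    obtain ⟨u, hu, hdu⟩ := hslim a p b α β c hα hβ hc t₀ ht₀
    rw [gromovProd_def]
    rcases hu with ⟨s, hs, rfl⟩ | ⟨s, hs, rfl⟩
    · have h1 : dist a (α s) = s := hα.dist_left hs
      have h2 : dist (α s) p = dist a p - s := hα.dist_right hs
      linarith [dist_triangle a (α s) (c t₀), dist_triangle p (α s) (c t₀),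
        dist_comm (α s) (c t₀), dist_comm p a, dist_comm p b, dist_comm p (α s)]
    · have h1 : dist p (β s) = s := hβ.dist_left hs
      have h2 : dist (β s) b = dist p b - s := hβ.dist_right hs
      linarith [dist_triangle b (β s) (c t₀), dist_triangle p (β s) (c t₀),
        dist_comm (β s) (c t₀), dist_comm p a, dist_comm p b, dist_comm b (β s),
        dist_comm (c t₀) b]
  -- step (c)
  obtain ⟨α', hα'⟩ := hgeo a w
  obtain ⟨β', hβ'⟩ := hgeo w b
  obtain ⟨u', hu', hdu'⟩ := hslim a w b α' β' c hα' hβ' hc t₀ ht₀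
  rcases hu' with ⟨s, hs, rfl⟩ | ⟨s, hs, rfl⟩
  · have h1 : gromovProd p a w ≤ dist p (α' s) := gromovProd_le_dist_geodesic hα' hs p
    have h2 : dist p (α' s) ≤ dist p (c t₀) + δ := by
      linarith [dist_triangle p (c t₀) (α' s)]
    linarith [min_le_left (gromovProd p a w) (gromovProd p w b)]
  · have h1 : gromovProd p w b ≤ dist p (β' s) := gromovProd_le_dist_geodesic hβ' hs p
    have h2 : dist p (β' s) ≤ dist p (c t₀) + δ := by
      linarith [dist_triangle p (c t₀) (β' s)]
    linarith [min_le_right (gromovProd p a w) (gromovProd p w b)]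

end Aux
section Aux2
open Filter Topology Metric Set

variable {X : Type*} [MetricSpace X]

/-- Dyadic subdivision lemma: a point on a geodesic joining the endpoints of a chain with
steps `≤ S` is within `δ * log₂(n) + S` of the chain. -/
lemma loglem (hgeo : IsGeodesicSpace X) {δ S : ℝ} (hδ : 0 ≤ δ) (hS : 0 ≤ S)
    (hslim : IsDeltaHyperbolic X δ) :
    ∀ n : ℕ, ∀ z : ℕ → X, (∀ k < n, dist (z k) (z (k+1)) ≤ S) →
    ∀ g : ℝ → X, IsGeodesicFromTo g (z 0) (z n) →
    ∀ t ∈ Set.Icc 0 (dist (z 0) (z n)),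
    ∃ k ≤ n, dist (g t) (z k) ≤ δ * (Nat.clog 2 n) + S := by
  intro n
  induction n using Nat.strong_induction_on with
  | _ n IH =>
  intro z hstep g hg t ht
  rcases Nat.lt_or_ge n 2 with hn2 | hn2
  · -- n = 0 or 1
    refine ⟨0, Nat.zero_le n, ?_⟩
    have h1 : dist (z 0) (g t) = t := hg.dist_left ht
    have h2 : dist (z 0) (z n) ≤ S := by
      interval_cases n
      · simpa using hS
      · simpa using hstep 0 (by norm_num)
    have : (0:ℝ) ≤ δ * (Nat.clog 2 n) := by positivity
    rw [dist_comm]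
    linarith [ht.2]
  · -- n ≥ 2
    set m : ℕ := (n+1)/2 with hm
    have hm1 : 1 ≤ m := by omega
    have hmn : m < n := by omega
    have hnm : 1 ≤ n - m := by omega
    have hnm2 : n - m ≤ m := by omega
    -- clog facts
    have hK1 : 1 ≤ Nat.clog 2 n := by
      by_contra h
      have h0 : Nat.clog 2 n = 0 := by omega
      have := Nat.le_pow_clog (by norm_num : 1 < 2) n
      rw [h0] at this
      simp at this
      omega
    have hpow : n ≤ 2 ^ Nat.clog 2 n := Nat.le_pow_clog (by norm_num) n
    have hpow2 : 2 ^ Nat.clog 2 n = 2 * 2 ^ (Nat.clog 2 n - 1) := by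
      conv_lhs => rw [show Nat.clog 2 n = (Nat.clog 2 n - 1) + 1 by omega]
      rw [pow_succ]
      ring
    have hclogm : Nat.clog 2 m ≤ Nat.clog 2 n - 1 := by
      rw [Nat.clog_le_iff_le_pow (by norm_num : 1 < 2)]
      omega
    have hclognm : Nat.clog 2 (n - m) ≤ Nat.clog 2 n - 1 :=
      le_trans (Nat.clog_mono_right 2 hnm2) hclogm
    have hcast : ∀ j : ℕ, j ≤ Nat.clog 2 n - 1 → (j : ℝ) + 1 ≤ (Nat.clog 2 n : ℝ) := by
      intro j hj
      have : j + 1 ≤ Nat.clog 2 n := by omega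
      exact_mod_cast this
    obtain ⟨α, hα⟩ := hgeo (z 0) (z m)
    obtain ⟨β, hβ⟩ := hgeo (z m) (z n)
    obtain ⟨u, hu, hdu⟩ := hslim (z 0) (z m) (z n) α β g hα hβ hg t ht
    rcases hu with ⟨s, hs, rfl⟩ | ⟨s, hs, rfl⟩
    · obtain ⟨k, hk, hdk⟩ := IH m hmn z (fun k hk => hstep k (by omega)) α hα s hs
      refine ⟨k, by omega, ?_⟩
      have h1 := hcast _ hclogm
      calc dist (g t) (z k) ≤ dist (g t) (α s) + dist (α s) (z k) := dist_triangle _ _ _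
        _ ≤ δ + (δ * (Nat.clog 2 m) + S) := by linarith
        _ ≤ δ * (Nat.clog 2 n) + S := by nlinarith
    · set z' : ℕ → X := fun k => z (m + k) with hz'
      have hz'0 : z' 0 = z m := rfl
      have hz'n : z' (n - m) = z n := by
        simp only [hz']
        congr 1
        omega
      have hβ' : IsGeodesicFromTo β (z' 0) (z' (n - m)) := by rw [hz'0, hz'n]; exact hβ
      have hs' : s ∈ Set.Icc 0 (dist (z' 0) (z' (n-m))) := by rw [hz'0, hz'n]; exact hs
      obtain ⟨k, hk, hdk⟩ := IH (n - m) (by omega) z'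
        (fun k hk => by
          have := hstep (m + k) (by omega)
          simpa [hz', Nat.add_assoc] using this) β hβ' s hs'
      refine ⟨m + k, by omega, ?_⟩
      have h1 := hcast _ hclognm
      calc dist (g t) (z (m+k)) ≤ dist (g t) (β s) + dist (β s) (z (m+k)) := dist_triangle _ _ _
        _ ≤ δ + (δ * (Nat.clog 2 (n-m)) + S) := by
            have : dist (β s) (z' k) = dist (β s) (z (m+k)) := rfl
            linarith [hdk, this.symm.le]
        _ ≤ δ * (Nat.clog 2 n) + S := by nlinarith

lemma sq_le_four_two_pow : ∀ m : ℕ, (m:ℝ)^2 ≤ 4 * 2^m := by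
  intro m
  induction m with
  | zero => norm_num
  | succ k IH =>
    rcases Nat.lt_or_ge k 3 with h | h
    · interval_cases k <;> norm_num
    · have hk : (3:ℝ) ≤ k := by exact_mod_cast h
      have h2 : ((k:ℝ)+1)^2 ≤ 2 * (k:ℝ)^2 := by nlinarith
      have h3 : (4:ℝ) * 2^(k+1) = 2 * (4 * 2^k) := by ring
      push_cast
      rw [h3]
      nlinarith

end Aux2
section Aux3
open Filter Topology Metric Set

variable {X : Type*} [MetricSpace X]

lemma IsGeodesicFromTo.restrict {g : ℝ → X} {a b : X} (hg : IsGeodesicFromTo g a b)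
    {t₁ t₂ : ℝ} (h1 : t₁ ∈ Set.Icc 0 (dist a b)) (h2 : t₂ ∈ Set.Icc 0 (dist a b))
    (h12 : t₁ ≤ t₂) : IsGeodesicFromTo (fun s => g (t₁ + s)) (g t₁) (g t₂) := by
  have hd : dist (g t₁) (g t₂) = t₂ - t₁ := by
    rw [hg.2.2 t₁ t₂ h1 h2, abs_of_nonpos (by linarith), neg_sub]
  refine ⟨by simp, ?_, ?_⟩
  · rw [hd]
    norm_num
  · intro s t hs ht
    rw [hd] at hs ht
    have hs' : t₁ + s ∈ Set.Icc 0 (dist a b) := ⟨by linarith [hs.1, h1.1], by linarith [hs.2, h2.2]⟩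
    have ht' : t₁ + t ∈ Set.Icc 0 (dist a b) := ⟨by linarith [ht.1, h1.1], by linarith [ht.2, h2.2]⟩
    rw [hg.2.2 _ _ hs' ht']
    congr 1
    ring

/-- The Morse-type constant. -/
def Hconst (δ S A B : ℝ) : ℝ :=
  2*δ + S + δ * (96*A*δ + 24*A*S + 4*A*B + 3)

lemma Hconst_ge {δ S A B : ℝ} (hδ : 0 ≤ δ) (hS : 1 ≤ S) (hA : 1 ≤ A) (hB : 0 ≤ B) :
    2*δ + S ≤ Hconst δ S A B := by
  have : 0 ≤ δ * (96*A*δ + 24*A*S + 4*A*B + 3) := by positivity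
  unfold Hconst
  linarith

lemma final_arith {δ S A B D : ℝ} (hδ : 0 ≤ δ) (hS : 1 ≤ S) (hA : 1 ≤ A) (hB : 0 ≤ B)
    (hD0 : 0 ≤ D) (n₂ : ℕ)
    (hDle : D ≤ 2*δ + (δ * (Nat.clog 2 n₂) + S))
    (hF3 : (n₂:ℝ) ≤ A*(6*D + B))
    (hcon : Hconst δ S A B < D) : False := by
  have hDbig : 2*δ + S < D := lt_of_le_of_lt (Hconst_ge hδ hS hA hB) hcon
  rcases Nat.eq_zero_or_pos (Nat.clog 2 n₂) with hK0 | hK1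
  · rw [hK0] at hDle
    push_cast at hDle
    linarith
  · have hn₂2 : 1 < n₂ := by
      by_contra h
      push_neg at h
      have : Nat.clog 2 n₂ ≤ 0 := by
        rw [Nat.clog_le_iff_le_pow (by norm_num : 1 < 2)]
        simpa using h
      omega
    have hpow : 2 ^ (Nat.clog 2 n₂ - 1) < n₂ :=
      Nat.pow_pred_clog_lt_self (by norm_num) hn₂2
    set K := Nat.clog 2 n₂ with hKdef
    have hsq : ((K-1:ℕ):ℝ)^2 ≤ 4 * 2^(K-1:ℕ) := sq_le_four_two_pow _
    have hpowR : (2:ℝ)^(K-1:ℕ) ≤ (n₂:ℝ) := by exact_mod_cast hpow.le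
    have hKcast : ((K-1:ℕ):ℝ) = (K:ℝ) - 1 := by
      have : (1:ℕ) ≤ K := hK1
      push_cast [Nat.cast_sub this]
      ring
    set k := (K:ℝ) with hk
    have hk1 : (1:ℝ) ≤ k := by
      rw [hk]
      have : (1:ℕ) ≤ K := hK1
      exact_mod_cast this
    have hF2 : (k-1)^2 ≤ 4*(n₂:ℝ) := by
      rw [← hKcast]
      nlinarith [hsq, hpowR]
    have hF1 : D ≤ 2*δ + δ*k + S := by linarith [hDle]
    rcases eq_or_lt_of_le hδ with hδ0 | hδpos
    · rw [← hδ0] at hF1 hDbig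
      linarith
    · have hHdef : Hconst δ S A B = 2*δ + S + δ * (96*A*δ + 24*A*S + 4*A*B + 3) := rfl
      have hkbig : 96*A*δ + 24*A*S + 4*A*B + 3 < k := by
        have h7 : δ * (96*A*δ + 24*A*S + 4*A*B + 3) < δ * k := by
          rw [hHdef] at hcon
          nlinarith [hcon, hF1]
        exact lt_of_mul_lt_mul_left h7 hδ
      have hkpos : (0:ℝ) < k := by linarith
      have hkk : (96*A*δ + 24*A*S + 4*A*B + 3)*k < k*k :=
        mul_lt_mul_of_pos_right hkbig hkpos
      have h8 : 24*A*D ≤ 24*A*(2*δ + δ*k + S) :=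
        mul_le_mul_of_nonneg_left hF1 (by positivity)
      have h9 : k*k - 2*k + 1 ≤ 48*A*δ + 24*(A*(δ*k)) + 24*A*S + 4*A*B := by
        nlinarith [hF2, hF3, h8]
      have m1 : 0 ≤ (k-1)*(A*δ) := mul_nonneg (by linarith) (by positivity)
      have m2 : 0 ≤ (k-1)*(A*S) := mul_nonneg (by linarith) (by positivity)
      have m3 : 0 ≤ (k-1)*(A*B) := mul_nonneg (by linarith) (by positivity)
      nlinarith [hkk, h9, m1, m2, m3, hk1]

/-- Morse lemma: a geodesic joining the endpoints of a discrete quasi-geodesic chain stays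
within a bounded distance of the chain. -/
lemma chain_close (hgeo : IsGeodesicSpace X) {δ S A B : ℝ} (hδ : 0 ≤ δ) (hS : 1 ≤ S)
    (hA : 1 ≤ A) (hB : 0 ≤ B) (hslim : IsDeltaHyperbolic X δ)
    (n : ℕ) (z : ℕ → X) (hstep : ∀ k < n, dist (z k) (z (k+1)) ≤ S)
    (hlow : ∀ k ≤ n, ∀ k' ≤ n, |(k:ℝ) - (k':ℝ)| / A - B ≤ dist (z k) (z k'))
    (g : ℝ → X) (hg : IsGeodesicFromTo g (z 0) (z n)) :
    ∀ t ∈ Set.Icc 0 (dist (z 0) (z n)), ∃ k ≤ n, dist (g t) (z k) ≤ Hconst δ S A B := by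
  classical
  set ℓ := dist (z 0) (z n) with hℓ
  have hℓ0 : 0 ≤ ℓ := dist_nonneg
  have hne : (Finset.range (n+1)).Nonempty := ⟨0, Finset.mem_range.mpr (Nat.succ_pos n)⟩
  set φ : ℝ → ℝ := fun t => (Finset.range (n+1)).inf' hne (fun k => dist (g t) (z k)) with hφ
  have hφle : ∀ t, ∀ k ≤ n, φ t ≤ dist (g t) (z k) := by
    intro t k hk
    exact Finset.inf'_le _ (Finset.mem_range.mpr (by omega))
  have hφex : ∀ t, ∃ k ≤ n, φ t = dist (g t) (z k) := by
    intro t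
    obtain ⟨k, hk, hke⟩ := Finset.exists_mem_eq_inf' hne (fun k => dist (g t) (z k))
    exact ⟨k, Nat.lt_succ_iff.mp (Finset.mem_range.mp hk), hke⟩
  have hφ0 : ∀ t, 0 ≤ φ t := fun t => Finset.le_inf' hne _ (fun k _ => dist_nonneg)
  have hφlip : ∀ t t', t ∈ Set.Icc 0 ℓ → t' ∈ Set.Icc 0 ℓ → φ t ≤ φ t' + |t - t'| := by
    intro t t' htm ht'm
    obtain ⟨k, hk, hke⟩ := hφex t'
    have h1 : φ t ≤ dist (g t) (z k) := hφle t k hk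
    have h2 : dist (g t) (z k) ≤ dist (g t) (g t') + dist (g t') (z k) := dist_triangle _ _ _
    rw [hg.2.2 t t' htm ht'm] at h2
    linarith [hke.le, hke.ge]
  have hcont : ContinuousOn φ (Set.Icc 0 ℓ) := by
    refine LipschitzOnWith.continuousOn (K := 1) (LipschitzOnWith.of_dist_le_mul ?_)
    intro t htm t' ht'm
    rw [Real.dist_eq, Real.dist_eq, NNReal.coe_one, one_mul, abs_sub_le_iff]
    constructor
    · linarith [hφlip t t' htm ht'm]
    · have := hφlip t' t ht'm htm
      rw [abs_sub_comm] at this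
      linarith
  obtain ⟨ts, htsm, htsmax⟩ := isCompact_Icc.exists_isMaxOn (Set.nonempty_Icc.mpr hℓ0) hcont
  have hmax : ∀ t ∈ Set.Icc 0 ℓ, φ t ≤ φ ts := htsmax
  set D := φ ts with hD
  have hD0 : 0 ≤ D := hφ0 ts
  have main : D ≤ Hconst δ S A B := by
    by_contra hcon
    push_neg at hcon
    have hDbig : 2*δ + S < D := lt_of_le_of_lt (Hconst_ge hδ hS hA hB) hcon
    set t₁ := max 0 (ts - 2*D) with ht₁def
    set t₂ := min ℓ (ts + 2*D) with ht₂def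
    have ht₁m : t₁ ∈ Set.Icc 0 ℓ :=
      ⟨le_max_left _ _, max_le hℓ0 (by linarith [htsm.2])⟩
    have ht₂m : t₂ ∈ Set.Icc 0 ℓ :=
      ⟨le_min hℓ0 (by linarith [htsm.1]), min_le_left _ _⟩
    have ht₁ts : t₁ ≤ ts := max_le htsm.1 (by linarith)
    have htst₂ : ts ≤ t₂ := le_min htsm.2 (by linarith)
    have hd1 : dist (g t₁) (g ts) = ts - t₁ := by
      rw [hg.2.2 _ _ ht₁m htsm, abs_of_nonpos (by linarith), neg_sub]
    have hd1' : ts - t₁ ≤ 2*D := by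
      have := le_max_right 0 (ts - 2*D)
      linarith
    have hd2 : dist (g ts) (g t₂) = t₂ - ts := by
      rw [hg.2.2 _ _ htsm ht₂m, abs_of_nonpos (by linarith), neg_sub]
    have hd2' : t₂ - ts ≤ 2*D := by
      have := min_le_right ℓ (ts + 2*D)
      linarith
    obtain ⟨i, hi, hie⟩ := hφex t₁
    obtain ⟨j, hj, hje⟩ := hφex t₂
    set u := g t₁ with hu
    set v := g t₂ with hv
    have he₁ : dist u (z i) ≤ D := by rw [← hie]; exact hmax t₁ ht₁m
    have he₂ : dist v (z j) ≤ D := by rw [← hje]; exact hmax t₂ ht₂m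
    -- lower bound for points near the i-side
    have hubnd : ∀ q : X, dist u q ≤ dist u (z i) → D ≤ dist (g ts) q := by
      intro q hq
      rcases le_or_gt (2*D) ts with hcase | hcase
      · have ht₁eq : t₁ = ts - 2*D := max_eq_right (by linarith)
        have h5 : dist (g ts) u = 2*D := by
          rw [dist_comm, hd1, ht₁eq]
          ring
        have h6 : dist u q ≤ D := le_trans hq he₁
        linarith [dist_triangle (g ts) q u, dist_comm q u]
      · have ht₁eq : t₁ = 0 := max_eq_left (by linarith)
        have hφt₁0 : φ t₁ = 0 := by
          refine le_antisymm ?_ (hφ0 t₁)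
          rw [ht₁eq]
          simpa [hg.1] using hφle 0 0 (Nat.zero_le n)
        have hzi : dist u (z i) = 0 := by rw [← hie]; exact hφt₁0
        have hq0 : dist u q ≤ 0 := hzi ▸ hq
        have hDle : D ≤ dist (g ts) (z i) := hφle ts i hi
        have h7 : dist (g ts) (z i) ≤ dist (g ts) q + dist q u + dist u (z i) :=
          dist_triangle4 _ _ _ _
        have := dist_comm q u
        linarith [dist_nonneg (x := q) (y := u)]
    -- lower bound for points near the j-side
    have hvbnd : ∀ q : X, dist q v ≤ dist v (z j) → D ≤ dist (g ts) q := by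
      intro q hq
      rcases le_or_gt (ts + 2*D) ℓ with hcase | hcase
      · have ht₂eq : t₂ = ts + 2*D := min_eq_right (by linarith)
        have h5 : dist (g ts) v = 2*D := by
          rw [hd2, ht₂eq]
          ring
        have h6 : dist q v ≤ D := le_trans hq he₂
        have h7 : dist (g ts) v ≤ dist (g ts) q + dist q v := dist_triangle _ _ _
        linarith
      · have ht₂eq : t₂ = ℓ := min_eq_left (by linarith)
        have hφt₂0 : φ t₂ = 0 := by
          refine le_antisymm ?_ (hφ0 t₂)
          rw [ht₂eq]
          have h20 : g ℓ = z n := by rw [hℓ]; exact hg.2.1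
          simpa [h20] using hφle ℓ n le_rfl
        have hzj : dist v (z j) = 0 := by rw [← hje]; exact hφt₂0
        have hq0 : dist q v ≤ 0 := hzj ▸ hq
        have hDle : D ≤ dist (g ts) (z j) := hφle ts j hj
        have h7 : dist (g ts) (z j) ≤ dist (g ts) q + dist q v + dist v (z j) :=
          dist_triangle4 _ _ _ _
        linarith
    obtain ⟨gui, hgui⟩ := hgeo u (z i)
    obtain ⟨guj, hguj⟩ := hgeo u (z j)
    obtain ⟨gjv, hgjv⟩ := hgeo (z j) v
    obtain ⟨gij, hgij⟩ := hgeo (z i) (z j)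
    have hguv : IsGeodesicFromTo (fun s => g (t₁ + s)) u v :=
      hg.restrict ht₁m ht₂m (le_trans ht₁ts htst₂)
    have hduv : dist u v = t₂ - t₁ := by
      rw [hu, hv, hg.2.2 _ _ ht₁m ht₂m, abs_of_nonpos (by linarith), neg_sub]
    have hts' : ts - t₁ ∈ Set.Icc 0 (dist u v) := by
      rw [hduv]
      exact ⟨by linarith, by linarith⟩
    obtain ⟨q, hq, hdq⟩ := hslim u (z j) v guj gjv _ hguj hgjv hguv (ts - t₁) hts'
    have hgw : g (t₁ + (ts - t₁)) = g ts := by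
      congr 1
      ring
    rw [hgw] at hdq
    rcases hq with ⟨s, hs, rfl⟩ | ⟨s, hs, rfl⟩
    swap
    · -- q on [z j, v] : contradiction
      have hqv : dist (gjv s) v ≤ dist v (z j) := by
        have := hgjv.dist_right hs
        rw [dist_comm v (z j)]
        linarith [hs.1]
      have := hvbnd _ hqv
      linarith
    -- q = guj s
    obtain ⟨q', hq', hdq'⟩ := hslim u (z i) (z j) gui gij guj hgui hgij hguj s hs
    have hqts : dist (g ts) q' ≤ 2*δ := by
      linarith [dist_triangle (g ts) (guj s) q']
    rcases hq' with ⟨s', hs', rfl⟩ | ⟨s', hs', rfl⟩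
    · -- q' on [u, z i] : contradiction
      have hq1 : dist u (gui s') ≤ dist u (z i) := by
        rw [hgui.dist_left hs']
        exact hs'.2
      have := hubnd _ hq1
      linarith
    -- q' = gij s' on [z i, z j]
    have hzij : dist (z i) (z j) ≤ 6*D := by
      have t1 : dist (z i) (z j) ≤ dist (z i) u + dist u (g ts) + dist (g ts) (z j) :=
        dist_triangle4 _ _ _ _
      have t2 : dist (g ts) (z j) ≤ dist (g ts) v + dist v (z j) := dist_triangle _ _ _
      have c1 : dist (z i) u = dist u (z i) := dist_comm _ _
      have c2 : dist u (g ts) = ts - t₁ := by rw [hu, hd1]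
      have c3 : dist (g ts) v = t₂ - ts := by rw [hv, hd2]
      linarith
    have hApos : (0:ℝ) < A := by linarith
    rcases le_or_gt i j with hij | hij
    · -- chain forward from i to j
      set n₂ := j - i with hn₂def
      set ζ : ℕ → X := fun r => z (i + r) with hζ
      have hζn : ζ n₂ = z j := by
        simp only [hζ]
        congr 1
        omega
      have hgij' : IsGeodesicFromTo gij (ζ 0) (ζ n₂) := by
        rw [show ζ 0 = z i from rfl, hζn]
        exact hgij
      have hs'' : s' ∈ Set.Icc 0 (dist (ζ 0) (ζ n₂)) := by
        rw [show ζ 0 = z i from rfl, hζn]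
        exact hs'
      obtain ⟨k, hk, hdk⟩ := loglem hgeo hδ (by linarith : (0:ℝ) ≤ S) hslim n₂ ζ
        (fun r hr => by
          have := hstep (i + r) (by omega)
          simpa [hζ, Nat.add_assoc] using this) gij hgij' s' hs''
      have hDle : D ≤ 2*δ + (δ * (Nat.clog 2 n₂) + S) := by
        have h10 : D ≤ dist (g ts) (z (i+k)) := hφle ts (i+k) (by omega)
        have h11 : dist (g ts) (z (i+k)) ≤ dist (g ts) (gij s') + dist (gij s') (z (i+k)) :=
          dist_triangle _ _ _
        have h12 : dist (gij s') (ζ k) = dist (gij s') (z (i+k)) := rfl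
        linarith [hdk, h12.le, h12.ge]
      have hF3 : (n₂:ℝ) ≤ A*(6*D + B) := by
        have hlo := hlow i hi j hj
        have hij' : (i:ℝ) ≤ (j:ℝ) := by exact_mod_cast hij
        have habs : |(i:ℝ) - (j:ℝ)| = (n₂:ℝ) := by
          rw [abs_sub_comm, abs_of_nonneg (by linarith), hn₂def]
          push_cast [Nat.cast_sub hij]
          ring
        rw [habs] at hlo
        have h13 : (n₂:ℝ)/A ≤ 6*D + B := by linarith [hlo, hzij]
        have h14 := (div_le_iff₀ hApos).mp h13
        linarith [h14]
      exact final_arith hδ hS hA hB hD0 n₂ hDle hF3 hcon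
    · -- chain backward from i to j
      set n₂ := i - j with hn₂def
      set ζ : ℕ → X := fun r => z (i - r) with hζ
      have hζn : ζ n₂ = z j := by
        simp only [hζ]
        congr 1
        omega
      have hgij' : IsGeodesicFromTo gij (ζ 0) (ζ n₂) := by
        rw [show ζ 0 = z i from rfl, hζn]
        exact hgij
      have hs'' : s' ∈ Set.Icc 0 (dist (ζ 0) (ζ n₂)) := by
        rw [show ζ 0 = z i from rfl, hζn]
        exact hs'
      obtain ⟨k, hk, hdk⟩ := loglem hgeo hδ (by linarith : (0:ℝ) ≤ S) hslim n₂ ζ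
        (fun r hr => by
          have h := hstep (i - r - 1) (by omega)
          rw [dist_comm] at h
          have e1 : ζ r = z (i - r - 1 + 1) := by
            simp only [hζ]
            congr 1 <;> omega
          have e2 : ζ (r+1) = z (i - r - 1) := by
            simp only [hζ]
            congr 1 <;> omega
          rw [e1, e2]
          exact h) gij hgij' s' hs''
      have hDle : D ≤ 2*δ + (δ * (Nat.clog 2 n₂) + S) := by
        have h10 : D ≤ dist (g ts) (z (i-k)) := hφle ts (i-k) (by omega)
        have h11 : dist (g ts) (z (i-k)) ≤ dist (g ts) (gij s') + dist (gij s') (z (i-k)) :=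
          dist_triangle _ _ _
        have h12 : dist (gij s') (ζ k) = dist (gij s') (z (i-k)) := rfl
        linarith [hdk, h12.le, h12.ge]
      have hF3 : (n₂:ℝ) ≤ A*(6*D + B) := by
        have hlo := hlow i hi j hj
        have hij' : (j:ℝ) ≤ (i:ℝ) := by exact_mod_cast hij.le
        have habs : |(i:ℝ) - (j:ℝ)| = (n₂:ℝ) := by
          rw [abs_of_nonneg (by linarith), hn₂def]
          push_cast [Nat.cast_sub hij.le]
          ring
        rw [habs] at hlo
        have h13 : (n₂:ℝ)/A ≤ 6*D + B := by linarith [hlo, hzij]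
        have h14 := (div_le_iff₀ hApos).mp h13
        linarith [h14]
      exact final_arith hδ hS hA hB hD0 n₂ hDle hF3 hcon
  intro t htm
  obtain ⟨k, hk, hke⟩ := hφex t
  exact ⟨k, hk, by rw [← hke]; exact le_trans (hmax t htm) main⟩

end Aux3
section Aux4
open Filter Topology Metric Set

variable {X : Type*} [MetricSpace X]

lemma gromovProd_comm (p a b : X) : gromovProd p a b = gromovProd p b a := by
  rw [gromovProd_def, gromovProd_def, dist_comm a b]
  ring

lemma orbit_iter {f : X → X} {x : ℕ → X} (hx : IsBackwardOrbit f x) :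
    ∀ m i, f^[m] (x (i + m)) = x i := by
  intro m
  induction m with
  | zero => intro i; simp
  | succ k IH =>
    intro i
    rw [Function.iterate_succ_apply]
    have h1 : f (x (i + (k+1))) = x (i + k) := by
      have := hx (i + k)
      simpa [Nat.add_assoc] using this
    rw [show x (i + (k+1)) = x (i + k + 1) from by rw [Nat.add_assoc]] at h1 ⊢
    rw [h1]
    exact IH i

lemma orbit_mono {f : X → X} (hf : Nonexpanding f) {x y : ℕ → X}
    (hx : IsBackwardOrbit f x) (hy : IsBackwardOrbit f y) :
    ∀ a b t : ℕ, dist (x a) (y b) ≤ dist (x (a+t)) (y (b+t)) := by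
  intro a b t
  induction t with
  | zero => exact le_refl _
  | succ k IH =>
    calc dist (x a) (y b) ≤ dist (x (a+k)) (y (b+k)) := IH
      _ = dist (f (x (a+k+1))) (f (y (b+k+1))) := by rw [hx (a+k), hy (b+k)]
      _ ≤ dist (x (a+k+1)) (y (b+k+1)) := hf _ _
      _ = dist (x (a+(k+1))) (y (b+(k+1))) := by rw [Nat.add_assoc, Nat.add_assoc]

lemma steps_bound {x : ℕ → X} {S : ℝ} (hs : ∀ n, dist (x n) (x (n+1)) ≤ S) :
    ∀ i m : ℕ, dist (x i) (x (i + m)) ≤ m * S := by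
  intro i m
  induction m with
  | zero => simp
  | succ k IH =>
    have h1 : dist (x i) (x (i + k + 1)) ≤ dist (x i) (x (i+k)) + dist (x (i+k)) (x (i+k+1)) :=
      dist_triangle _ _ _
    have h2 := hs (i + k)
    rw [show i + (k+1) = i + k + 1 from by omega]
    push_cast
    linarith

lemma walk_trans {P Q : ℕ → Prop} (N : ℕ) (h0 : P 0) (hN : Q N) (hall : ∀ k ≤ N, P k ∨ Q k) :
    ∃ k ≤ N, P k ∧ (Q k ∨ (k + 1 ≤ N ∧ Q (k+1))) := by
  classical
  by_cases hA : ∀ k ≤ N, P k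
  · exact ⟨N, le_rfl, hA N le_rfl, Or.inl hN⟩
  · push_neg at hA
    obtain ⟨k₀, hk₀N, hk₀⟩ := hA
    have hex : ∃ k, k ≤ N ∧ ¬ P k := ⟨k₀, hk₀N, hk₀⟩
    have hm := Nat.find_spec hex
    have hm0 : Nat.find hex ≠ 0 := by
      intro h
      rw [h] at hm
      exact hm.2 h0
    obtain ⟨k, hkeq⟩ : ∃ k, Nat.find hex = k + 1 := ⟨Nat.find hex - 1, by omega⟩
    rw [hkeq] at hm
    have hkP : P k := by
      by_contra hkp
      have := Nat.find_min hex (show k < Nat.find hex by omega)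
      exact this ⟨by omega, hkp⟩
    have hkQ : Q (k+1) := (hall (k+1) hm.1).resolve_left hm.2
    exact ⟨k, by omega, hkP, Or.inr ⟨hm.1, hkQ⟩⟩

lemma pigeon (σ : ℕ → ℕ) (N₂ : ℕ) (hb : ∀ m, σ m ≤ N₂) :
    ∃ s, s ≤ N₂ ∧ ∀ M, ∃ m, M ≤ m ∧ σ m = s := by
  classical
  by_contra h
  push_neg at h
  have h' : ∀ s, ∃ M, ∀ m, M ≤ m → σ m ≠ s := by
    intro s
    rcases le_or_gt s N₂ with hs | hs
    · exact h s hs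
    · exact ⟨0, fun m _ hc => by have := hb m; omega⟩
  choose Mf hMf using h'
  set T := (Finset.range (N₂+1)).sup Mf with hT
  have h1 : Mf (σ T) ≤ T := Finset.le_sup (Finset.mem_range.mpr (by have := hb T; omega))
  exact hMf (σ T) T h1 rfl

lemma growth_all {x : ℕ → X} {p : X} {S : ℝ} (hS : 1 ≤ S) (n₀ K : ℕ) (hn₀ : 1 ≤ n₀)
    (hstep : ∀ n, dist (x n) (x (n+1)) ≤ S)
    (hgrow : ∀ k, K ≤ k → dist p (x k) + 1 ≤ dist p (x (k + n₀))) :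
    ∀ k m : ℕ, K ≤ k → dist p (x k) + ((m:ℝ)/n₀ - 1 - n₀ * S) ≤ dist p (x (k+m)) := by
  have G1 : ∀ k, K ≤ k → ∀ t : ℕ, dist p (x k) + t ≤ dist p (x (k + t*n₀)) := by
    intro k hk t
    induction t with
    | zero => simp
    | succ r IH =>
      have h1 := hgrow (k + r*n₀) (by omega)
      rw [show k + (r+1)*n₀ = k + r*n₀ + n₀ from by ring]
      push_cast
      push_cast at IH
      linarith
  intro k m hk
  set t := m / n₀ with ht
  set r := m % n₀ with hr
  have hm : m = t * n₀ + r := by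
    rw [ht, hr, Nat.mul_comm]
    exact (Nat.div_add_mod m n₀).symm
  have hrn : r < n₀ := Nat.mod_lt _ (by omega)
  have h1 := G1 k hk t
  have h2 : dist (x (k + t*n₀)) (x (k + t*n₀ + r)) ≤ r * S := steps_bound hstep _ _
  have h3 : dist p (x (k+m)) ≥ dist p (x (k + t*n₀)) - dist (x (k + t*n₀)) (x (k + t*n₀ + r)) := by
    rw [show k + m = k + t*n₀ + r from by omega]
    linarith [dist_triangle p (x (k + t*n₀)) (x (k + t*n₀ + r)),
      dist_triangle p (x (k + t*n₀ + r)) (x (k + t*n₀)), dist_comm (x (k + t*n₀)) (x (k + t*n₀ + r))]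
  have h4 : (r:ℝ) * S ≤ n₀ * S := by
    have : (r:ℝ) ≤ n₀ := by exact_mod_cast hrn.le
    nlinarith
  have h5 : (m:ℝ)/n₀ - 1 ≤ (t:ℝ) := by
    have hn₀pos : (0:ℝ) < n₀ := by exact_mod_cast hn₀
    have hmr : (m:ℝ) = t * n₀ + r := by exact_mod_cast hm
    have hup : (m:ℝ)/n₀ ≤ (t:ℝ) + 1 := by
      rw [div_le_iff₀ hn₀pos]
      nlinarith [hmr, (by exact_mod_cast hrn.le : (r:ℝ) ≤ (n₀:ℝ))]
    linarith
  linarith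

lemma growth_tendsto {x : ℕ → X} {p : X} {S : ℝ} (hS : 1 ≤ S) (n₀ K : ℕ) (hn₀ : 1 ≤ n₀)
    (hstep : ∀ n, dist (x n) (x (n+1)) ≤ S)
    (hgrow : ∀ k, K ≤ k → dist p (x k) + 1 ≤ dist p (x (k + n₀))) :
    ∀ C : ℝ, ∃ N : ℕ, ∀ n, N ≤ n → C ≤ dist p (x n) := by
  intro C
  set R := (n₀:ℝ) * (C - dist p (x K) + 1 + n₀*S) with hR
  refine ⟨K + Nat.ceil (max R 0) + 1, fun n hn => ?_⟩
  have h1 := growth_all hS n₀ K hn₀ hstep hgrow K (n - K) le_rfl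
  rw [show K + (n - K) = n from by omega] at h1
  have hn₀pos : (0:ℝ) < n₀ := by exact_mod_cast hn₀
  have h2 : R ≤ ((n - K : ℕ):ℝ) := by
    have h3 : Nat.ceil (max R 0) + 1 ≤ n - K := by omega
    have h4 : R ≤ max R 0 := le_max_left _ _
    have h5 : (max R 0 : ℝ) ≤ Nat.ceil (max R 0) := Nat.le_ceil _
    have h6 : ((Nat.ceil (max R 0) : ℕ):ℝ) + 1 ≤ ((n - K : ℕ):ℝ) := by exact_mod_cast h3
    linarith
  have h7 : C - dist p (x K) + 1 + n₀*S ≤ ((n - K:ℕ):ℝ)/n₀ := by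
    rw [le_div_iff₀ hn₀pos]
    rw [hR] at h2
    nlinarith
  linarith

lemma chainlow_gen {x : ℕ → X} {p : X} {S : ℝ} (hS : 1 ≤ S) (n₀ K : ℕ) (hn₀ : 1 ≤ n₀)
    (hstep : ∀ n, dist (x n) (x (n+1)) ≤ S)
    (hgrow : ∀ k, K ≤ k → dist p (x k) + 1 ≤ dist p (x (k + n₀))) :
    ∀ k k' : ℕ, K ≤ k → K ≤ k' →
      |(k:ℝ) - (k':ℝ)| / (n₀:ℝ) - (1 + (n₀:ℝ)*S) ≤ dist (x k) (x k') := by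
  have main : ∀ k k' : ℕ, K ≤ k → k ≤ k' →
      |(k:ℝ) - (k':ℝ)| / (n₀:ℝ) - (1 + (n₀:ℝ)*S) ≤ dist (x k) (x k') := by
    intro k k' hk h
    have h1 := growth_all hS n₀ K hn₀ hstep hgrow k (k' - k) hk
    rw [show k + (k' - k) = k' from by omega] at h1
    have hkk' : (k:ℝ) ≤ (k':ℝ) := by exact_mod_cast h
    have habs : |(k:ℝ) - (k':ℝ)| = ((k' - k:ℕ):ℝ) := by
      rw [abs_sub_comm, abs_of_nonneg (by linarith), Nat.cast_sub h]
    rw [habs]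
    have h2 : dist p (x k') - dist p (x k) ≤ dist (x k) (x k') := by
      have h3 := abs_dist_sub_le (x k') (x k) p
      have h4 := le_abs_self (dist (x k') p - dist (x k) p)
      rw [dist_comm p (x k'), dist_comm p (x k), dist_comm (x k) (x k')]
      linarith
    linarith
  intro k k' hk hk'
  rcases le_total k k' with h | h
  · exact main k k' hk h
  · rw [dist_comm, abs_sub_comm]
    exact main k' k hk' h

end Aux4

/-- **Theorem (uniform closeness of backward orbits at a repelling BRFP).**
Let `X` be a proper geodesic Gromov hyperbolic metric space, `f : X → X` non-expanding,
and `η = [γ] ∈ ∂_G X` a repelling BRFP of `f` (`log Λ_η = L > 0`). If `(x_n)` and `(y_n)`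
are two backward orbits of `f` with bounded step, both converging to `η`, then
`sup_n d(x_n, y_n) < +∞`. -/
theorem backward_orbits_uniformly_close
    {X : Type*} [MetricSpace X] [ProperSpace X]
    (hgeo : IsGeodesicSpace X) (hhyp : GromovHyperbolic X)
    (f : X → X) (hf : Nonexpanding f)
    (γ : ℝ → X) (hη : IsBRFP f γ)
    (L : ℝ) (hL : HasStableLogDilation (γ 0) γ f L) (hrep : 0 < L)
    (x y : ℕ → X)
    (hx : IsBackwardOrbit f x) (hxs : BoundedStep x)
    (hxc : Filter.Tendsto x Filter.atTop (gromovFilter γ))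
    (hy : IsBackwardOrbit f y) (hys : BoundedStep y)
    (hyc : Filter.Tendsto y Filter.atTop (gromovFilter γ)) :
    ∃ M : ℝ, ∀ n : ℕ, dist (x n) (y n) ≤ M := by
  classical
  obtain ⟨δ, hδ, hslim⟩ := hhyp
  obtain ⟨Sx, hSx⟩ := hxs
  obtain ⟨Sy, hSy⟩ := hys
  set S : ℝ := max (max Sx Sy) 1 with hSdef
  have hS1 : (1:ℝ) ≤ S := le_max_right _ _
  have hS0 : (0:ℝ) ≤ S := by linarith
  have hxstep : ∀ n, dist (x n) (x (n+1)) ≤ S :=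
    fun n => le_trans (hSx n) (le_trans (le_max_left _ _) (le_max_left _ _))
  have hystep : ∀ n, dist (y n) (y (n+1)) ≤ S :=
    fun n => le_trans (hSy n) (le_trans (le_max_right _ _) (le_max_left _ _))
  -- choose n₀ with l n₀ ≥ 2
  obtain ⟨l, hl, hlim⟩ := hL
  have hev : ∀ᶠ n : ℕ in Filter.atTop, L/2 < l n / n :=
    hlim.eventually (eventually_gt_nhds (by linarith))
  obtain ⟨n₀, hn₀l, hn₀c⟩ := (hev.and (Filter.eventually_ge_atTop (max 1 (Nat.ceil (4/L))))).exists
  have hn₀1 : 1 ≤ n₀ := le_trans (le_max_left _ _) hn₀c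
  have hn₀pos : (0:ℝ) < n₀ := by exact_mod_cast hn₀1
  have hn₀4L : 4/L ≤ (n₀:ℝ) := by
    have h := le_trans (le_max_right 1 (Nat.ceil (4/L))) hn₀c
    exact le_trans (Nat.le_ceil _) (by exact_mod_cast h)
  have hl₀2 : 2 ≤ l n₀ := by
    have h1 : L/2 * (n₀:ℝ) < l n₀ := by
      have h2 := hn₀l
      rw [lt_div_iff₀ hn₀pos] at h2
      linarith
    have h3 : L/2 * (4/L) = 2 := by field_simp; ring
    have h4 : L/2 * (4/L) ≤ L/2 * (n₀:ℝ) :=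
      mul_le_mul_of_nonneg_left hn₀4L (by linarith)
    linarith
  -- growth along backward orbits converging to the repelling point
  have keyev : ∀ (w : ℕ → X), Filter.Tendsto w Filter.atTop (gromovFilter γ) →
      IsBackwardOrbit f w →
      ∃ K : ℕ, ∀ k, K ≤ k → dist (γ 0) (w k) + 1 ≤ dist (γ 0) (w (k + n₀)) := by
    intro w hw hwo
    have hld : Filter.liminf
        (fun q => ((dist q (γ 0) - dist (f^[n₀] q) (γ 0) : ℝ) : EReal)) (gromovFilter γ)
        = ((l n₀ : ℝ) : EReal) := hl n₀ hn₀1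
    have hlt : ((l n₀ - 1 : ℝ) : EReal) < Filter.liminf
        (fun q => ((dist q (γ 0) - dist (f^[n₀] q) (γ 0) : ℝ) : EReal)) (gromovFilter γ) := by
      rw [hld]
      exact_mod_cast (by linarith : l n₀ - 1 < l n₀)
    have hev2 : ∀ᶠ q in gromovFilter γ,
        ((l n₀ - 1:ℝ):EReal) < ((dist q (γ 0) - dist (f^[n₀] q) (γ 0) : ℝ):EReal) :=
      Filter.eventually_lt_of_lt_liminf hlt
    have hev3 := hw.eventually hev2
    rw [Filter.eventually_atTop] at hev3
    obtain ⟨K, hK⟩ := hev3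
    refine ⟨K, fun k hk => ?_⟩
    have h5 := hK (k + n₀) (by omega)
    rw [orbit_iter hwo n₀ k] at h5
    have h6 : l n₀ - 1 < dist (w (k+n₀)) (γ 0) - dist (w k) (γ 0) := by exact_mod_cast h5
    have d1 := dist_comm (γ 0) (w k)
    have d2 := dist_comm (γ 0) (w (k+n₀))
    linarith
  obtain ⟨Kx, hKx⟩ := keyev x hxc hx
  obtain ⟨Ky, hKy⟩ := keyev y hyc hy
  set K := max Kx Ky with hKdef
  have hKxg : ∀ k, K ≤ k → dist (γ 0) (x k) + 1 ≤ dist (γ 0) (x (k + n₀)) :=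
    fun k hk => hKx k (le_trans (le_max_left _ _) hk)
  have hKyg : ∀ k, K ≤ k → dist (γ 0) (y k) + 1 ≤ dist (γ 0) (y (k + n₀)) :=
    fun k hk => hKy k (le_trans (le_max_right _ _) hk)
  have tendx := growth_tendsto hS1 n₀ K hn₀1 hxstep hKxg
  have tendy := growth_tendsto hS1 n₀ K hn₀1 hystep hKyg
  -- constants
  set A : ℝ := (n₀:ℝ) with hAdef
  have hA1 : 1 ≤ A := by rw [hAdef]; exact_mod_cast hn₀1
  set B : ℝ := 1 + (n₀:ℝ)*S with hBdef
  have hB0 : 0 ≤ B := by rw [hBdef]; positivity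
  set Hc := Hconst δ S A B with hHc
  set C₁ : ℝ := 2*δ + 1 + Hc with hC₁
  set C₀ : ℝ := 2*C₁ with hC₀
  set DB : ℝ := dist (γ 0) (x K) + dist (x K) (y K) with hDB
  -- chain lower bounds
  have chainlowx : ∀ k k' : ℕ, K ≤ k → K ≤ k' →
      |(k:ℝ) - (k':ℝ)| / A - B ≤ dist (x k) (x k') := by
    intro k k' hk hk'
    rw [hAdef, hBdef]
    exact chainlow_gen hS1 n₀ K hn₀1 hxstep hKxg k k' hk hk'
  have chainlowy : ∀ k k' : ℕ, K ≤ k → K ≤ k' →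
      |(k:ℝ) - (k':ℝ)| / A - B ≤ dist (y k) (y k') := by
    intro k k' hk hk'
    rw [hAdef, hBdef]
    exact chainlow_gen hS1 n₀ K hn₀1 hystep hKyg k k' hk hk'
  -- convergence to the same boundary point: large Gromov products
  have hconv : ∀ M : ℝ, ∃ i j : ℕ, K ≤ i ∧ K ≤ j ∧ M ≤ gromovProd (γ 0) (x i) (y j) := by
    intro M
    have hxS : ∀ᶠ i in Filter.atTop, (M + 1 + 3*δ) ≤
        Filter.liminf (fun t : ℝ => gromovProd (γ 0) (x i) (γ t)) Filter.atTop := by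
      have h1 : Filter.Tendsto x Filter.atTop (⨅ M' : ℝ, Filter.principal
          {q | M' ≤ Filter.liminf (fun t : ℝ => gromovProd (γ 0) q (γ t)) Filter.atTop}) := hxc
      have h2 := Filter.tendsto_principal.mp (Filter.tendsto_iInf.mp h1 (M + 1 + 3*δ))
      exact h2
    have hyS : ∀ᶠ j in Filter.atTop, (M + 1 + 3*δ) ≤
        Filter.liminf (fun t : ℝ => gromovProd (γ 0) (y j) (γ t)) Filter.atTop := by
      have h1 : Filter.Tendsto y Filter.atTop (⨅ M' : ℝ, Filter.principal
          {q | M' ≤ Filter.liminf (fun t : ℝ => gromovProd (γ 0) q (γ t)) Filter.atTop}) := hyc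
      have h2 := Filter.tendsto_principal.mp (Filter.tendsto_iInf.mp h1 (M + 1 + 3*δ))
      exact h2
    obtain ⟨i, hi⟩ := (hxS.and (Filter.eventually_ge_atTop K)).exists
    obtain ⟨j, hj⟩ := (hyS.and (Filter.eventually_ge_atTop K)).exists
    have hbx : Filter.IsBoundedUnder (· ≥ ·) Filter.atTop
        (fun t : ℝ => gromovProd (γ 0) (x i) (γ t)) :=
      Filter.isBoundedUnder_of ⟨0, fun t => gromovProd_nonneg _ _ _⟩
    have hby : Filter.IsBoundedUnder (· ≥ ·) Filter.atTop
        (fun t : ℝ => gromovProd (γ 0) (y j) (γ t)) :=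
      Filter.isBoundedUnder_of ⟨0, fun t => gromovProd_nonneg _ _ _⟩
    have h3 : ∀ᶠ t : ℝ in Filter.atTop, M + 3*δ < gromovProd (γ 0) (x i) (γ t) :=
      Filter.eventually_lt_of_lt_liminf (lt_of_lt_of_le (by linarith) hi.1) hbx
    have h4 : ∀ᶠ t : ℝ in Filter.atTop, M + 3*δ < gromovProd (γ 0) (y j) (γ t) :=
      Filter.eventually_lt_of_lt_liminf (lt_of_lt_of_le (by linarith) hj.1) hby
    obtain ⟨t, ht3, ht4⟩ := (h3.and h4).exists
    have h5 := four_point hgeo hδ hslim (γ 0) (x i) (y j) (γ t)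
    have h6 : gromovProd (γ 0) (γ t) (y j) = gromovProd (γ 0) (y j) (γ t) :=
      gromovProd_comm _ _ _
    refine ⟨i, j, hi.2, hj.2, ?_⟩
    have h8 : M + 3*δ ≤ min (gromovProd (γ 0) (x i) (γ t)) (gromovProd (γ 0) (γ t) (y j)) :=
      le_min (le_of_lt ht3) (by rw [h6]; exact le_of_lt ht4)
    linarith
  -- the crossing argument
  have cross : ∀ R : ℝ, ∃ kk ll : ℕ, K ≤ kk ∧ K ≤ ll ∧
      dist (x kk) (y ll) ≤ C₀ ∧ R ≤ dist (γ 0) (x kk) := by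
    intro R
    obtain ⟨i, j, hiK, hjK, hij⟩ := hconv (max (R + C₁) (DB + 2*δ + 2))
    obtain ⟨c, hc⟩ := hgeo (x i) (y j)
    obtain ⟨α₁, hα₁⟩ := hgeo (x i) (x K)
    obtain ⟨β₁, hβ₁⟩ := hgeo (x K) (y j)
    obtain ⟨α₂, hα₂⟩ := hgeo (x K) (y K)
    obtain ⟨β₂, hβ₂⟩ := hgeo (y K) (y j)
    set ℓc := dist (x i) (y j) with hℓc
    have hℓc0 : 0 ≤ ℓc := dist_nonneg
    set N := Nat.ceil ℓc with hN
    set tk : ℕ → ℝ := fun k => min (k:ℝ) ℓc with htk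
    have htkm : ∀ k, tk k ∈ Set.Icc 0 ℓc := fun k =>
      ⟨le_min (by positivity) hℓc0, min_le_right _ _⟩
    have hall : ∀ k ≤ N,
        (∃ q ∈ α₁ '' Set.Icc 0 (dist (x i) (x K)), dist (c (tk k)) q ≤ δ) ∨
        (∃ q ∈ α₂ '' Set.Icc 0 (dist (x K) (y K)) ∪ β₂ '' Set.Icc 0 (dist (y K) (y j)),
          dist (c (tk k)) q ≤ 2*δ) := by
      intro k _
      obtain ⟨q, hq, hdq⟩ := hslim (x i) (x K) (y j) α₁ β₁ c hα₁ hβ₁ hc (tk k) (htkm k)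
      rcases hq with hqA | hqB
      · exact Or.inl ⟨q, hqA, hdq⟩
      · obtain ⟨s, hsm, rfl⟩ := hqB
        obtain ⟨q', hq', hdq'⟩ := hslim (x K) (y K) (y j) α₂ β₂ β₁ hα₂ hβ₂ hβ₁ s hsm
        exact Or.inr ⟨q', hq', by linarith [dist_triangle (c (tk k)) (β₁ s) q']⟩
    have h0 : (∃ q ∈ α₁ '' Set.Icc 0 (dist (x i) (x K)), dist (c (tk 0)) q ≤ δ) := by
      refine ⟨x i, ⟨0, ⟨le_rfl, dist_nonneg⟩, hα₁.1⟩, ?_⟩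
      have h1 : tk 0 = 0 := by
        simp only [htk, Nat.cast_zero]
        exact min_eq_left hℓc0
      rw [h1, hc.1, dist_self]
      exact hδ
    have hQN : (∃ q ∈ α₂ '' Set.Icc 0 (dist (x K) (y K)) ∪ β₂ '' Set.Icc 0 (dist (y K) (y j)),
        dist (c (tk N)) q ≤ 2*δ) := by
      refine ⟨y j, Or.inr ⟨dist (y K) (y j), ⟨dist_nonneg, le_rfl⟩, hβ₂.2.1⟩, ?_⟩
      have h1 : tk N = ℓc := min_eq_right (Nat.le_ceil _)
      rw [h1, hc.2.1, dist_self]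
      positivity
    obtain ⟨k, hkN, hPk, hQk⟩ := walk_trans N h0 hQN hall
    obtain ⟨qA, hqAm, hqAd⟩ := hPk
    have hQnear : ∃ qB ∈ α₂ '' Set.Icc 0 (dist (x K) (y K)) ∪
        β₂ '' Set.Icc 0 (dist (y K) (y j)), dist (c (tk k)) qB ≤ 2*δ + 1 := by
      rcases hQk with hQ1 | ⟨hk1N, hQ2⟩
      · obtain ⟨qB, h1, h2⟩ := hQ1
        exact ⟨qB, h1, by linarith⟩
      · obtain ⟨qB, h1, h2⟩ := hQ2
        have e1 : tk k ≤ tk (k+1) := by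
          simp only [htk]
          exact min_le_min (by exact_mod_cast Nat.le_succ k) le_rfl
        have e2 : tk (k+1) ≤ tk k + 1 := by
          simp only [htk]
          rcases le_total ((k:ℝ)) ℓc with h3 | h3
          · rw [min_eq_left h3]
            calc min ((k+1:ℕ):ℝ) ℓc ≤ ((k+1:ℕ):ℝ) := min_le_left _ _
              _ = (k:ℝ) + 1 := by push_cast; ring
          · rw [min_eq_right h3]
            calc min ((k+1:ℕ):ℝ) ℓc ≤ ℓc := min_le_right _ _
              _ ≤ ℓc + 1 := by linarith
        have hstep1 : dist (c (tk k)) (c (tk (k+1))) ≤ 1 := by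
          rw [hc.2.2 _ _ (htkm k) (htkm (k+1))]
          rw [abs_sub_comm, abs_of_nonneg (by linarith)]
          linarith
        exact ⟨qB, h1, by linarith [dist_triangle (c (tk k)) (c (tk (k+1))) qB]⟩
    obtain ⟨qB, hqBm, hqBd⟩ := hQnear
    have hdpz : gromovProd (γ 0) (x i) (y j) ≤ dist (γ 0) (c (tk k)) :=
      gromovProd_le_dist_geodesic hc (htkm k) (γ 0)
    have hRz : max (R + C₁) (DB + 2*δ + 2) ≤ dist (γ 0) (c (tk k)) := le_trans hij hdpz
    rcases hqBm with hqB1 | hqB2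
    · exfalso
      obtain ⟨s, hsm, rfl⟩ := hqB1
      have h2 : dist (x K) (α₂ s) = s := hα₂.dist_left hsm
      have h1 : dist (γ 0) (α₂ s) ≤ DB := by
        rw [hDB]
        linarith [dist_triangle (γ 0) (x K) (α₂ s), hsm.2]
      have h3 : dist (γ 0) (c (tk k)) ≤ DB + 2*δ + 1 := by
        linarith [dist_triangle (γ 0) (α₂ s) (c (tk k)), dist_comm (α₂ s) (c (tk k))]
      have h4 := le_trans (le_max_right (R + C₁) (DB + 2*δ + 2)) hRz
      linarith
    obtain ⟨sB, hsBm, rfl⟩ := hqB2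
    obtain ⟨sA, hsAm, rfl⟩ := hqAm
    -- Morse lemma on the x side
    have hxend : x (i - (i - K)) = x K := by congr 1; omega
    have hα₁' : IsGeodesicFromTo α₁ ((fun r => x (i - r)) 0) ((fun r => x (i - r)) (i - K)) := by
      show IsGeodesicFromTo α₁ (x (i - 0)) (x (i - (i - K)))
      rw [show i - 0 = i from rfl, hxend]
      exact hα₁
    have hsAm' : sA ∈ Set.Icc 0 (dist ((fun r => x (i - r)) 0) ((fun r => x (i - r)) (i - K))) := by
      show sA ∈ Set.Icc 0 (dist (x (i - 0)) (x (i - (i - K))))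
      rw [show i - 0 = i from rfl, hxend]
      exact hsAm
    obtain ⟨r, hr, hdr⟩ := chain_close hgeo hδ hS1 hA1 hB0 hslim (i - K) (fun r => x (i - r))
      (fun r hrn => by
        show dist (x (i - r)) (x (i - (r+1))) ≤ S
        have h := hxstep (i - r - 1)
        rw [dist_comm] at h
        have e1 : x (i - r) = x (i - r - 1 + 1) := by congr 1; omega
        have e2 : x (i - (r+1)) = x (i - r - 1) := by congr 1 <;> omega
        rw [e1, e2]
        exact h)
      (fun r hrn r' hrn' => by
        show |(r:ℝ) - (r':ℝ)| / A - B ≤ dist (x (i - r)) (x (i - r'))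
        have h := chainlowx (i - r) (i - r') (by omega) (by omega)
        have e : |((i-r:ℕ):ℝ) - ((i-r':ℕ):ℝ)| = |(r:ℝ) - (r':ℝ)| := by
          rw [Nat.cast_sub (by omega), Nat.cast_sub (by omega),
            show ((i:ℝ) - r) - ((i:ℝ) - r') = r' - r from by ring, abs_sub_comm]
        rw [e] at h
        exact h)
      α₁ hα₁' sA hsAm'
    -- Morse lemma on the y side
    have hyend : y (K + (j - K)) = y j := by congr 1; omega
    have hβ₂' : IsGeodesicFromTo β₂ ((fun r => y (K + r)) 0) ((fun r => y (K + r)) (j - K)) := by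
      show IsGeodesicFromTo β₂ (y (K + 0)) (y (K + (j - K)))
      rw [show K + 0 = K from rfl, hyend]
      exact hβ₂
    have hsBm' : sB ∈ Set.Icc 0 (dist ((fun r => y (K + r)) 0) ((fun r => y (K + r)) (j - K))) := by
      show sB ∈ Set.Icc 0 (dist (y (K + 0)) (y (K + (j - K))))
      rw [show K + 0 = K from rfl, hyend]
      exact hsBm
    obtain ⟨r', hr', hdr'⟩ := chain_close hgeo hδ hS1 hA1 hB0 hslim (j - K) (fun r => y (K + r))
      (fun r hrn => by
        show dist (y (K + r)) (y (K + (r+1))) ≤ S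
        have h := hystep (K + r)
        rw [show K + (r+1) = K + r + 1 from by omega]
        exact h)
      (fun r hrn r' hrn' => by
        show |(r:ℝ) - (r':ℝ)| / A - B ≤ dist (y (K + r)) (y (K + r'))
        have h := chainlowy (K + r) (K + r') (by omega) (by omega)
        have e : |((K+r:ℕ):ℝ) - ((K+r':ℕ):ℝ)| = |(r:ℝ) - (r':ℝ)| := by
          push_cast
          rw [show ((K:ℝ) + r) - ((K:ℝ) + r') = (r:ℝ) - r' from by ring]
        rw [e] at h
        exact h)
      β₂ hβ₂' sB hsBm'
    refine ⟨i - r, K + r', by omega, by omega, ?_, ?_⟩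
    · -- distance bound
      have t1 : dist (x (i-r)) (y (K+r')) ≤
          dist (x (i-r)) (α₁ sA) + dist (α₁ sA) (c (tk k)) + dist (c (tk k)) (y (K+r')) :=
        dist_triangle4 _ _ _ _
      have t2 : dist (c (tk k)) (y (K+r')) ≤ dist (c (tk k)) (β₂ sB) + dist (β₂ sB) (y (K+r')) :=
        dist_triangle _ _ _
      have c1 : dist (x (i-r)) (α₁ sA) = dist (α₁ sA) ((fun r => x (i - r)) r) := by
        rw [dist_comm]
      have c2 : dist (α₁ sA) (c (tk k)) = dist (c (tk k)) (α₁ sA) := dist_comm _ _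
      have hd1 : dist (α₁ sA) ((fun r => x (i - r)) r) ≤ Hc := by rw [hHc]; exact hdr
      have hd2 : dist (β₂ sB) ((fun r => y (K + r)) r') ≤ Hc := by rw [hHc]; exact hdr'
      have e3 : dist (β₂ sB) ((fun r => y (K + r)) r') = dist (β₂ sB) (y (K + r')) := rfl
      rw [e3] at hd2
      rw [hC₀, hC₁]
      rw [c1] at t1
      linarith
    · -- far from the base point
      have h1 : R + C₁ ≤ dist (γ 0) (c (tk k)) := le_trans (le_max_left _ _) hRz
      have h2 : dist (γ 0) (c (tk k)) ≤
          dist (γ 0) (x (i-r)) + dist (x (i-r)) (α₁ sA) + dist (α₁ sA) (c (tk k)) :=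
        dist_triangle4 _ _ _ _
      have hd1 : dist (α₁ sA) ((fun r => x (i - r)) r) ≤ Hc := by rw [hHc]; exact hdr
      have e4 : dist (α₁ sA) ((fun r => x (i - r)) r) = dist (α₁ sA) (x (i - r)) := rfl
      rw [e4] at hd1
      have c1 : dist (x (i-r)) (α₁ sA) = dist (α₁ sA) (x (i-r)) := dist_comm _ _
      have c2 : dist (α₁ sA) (c (tk k)) = dist (c (tk k)) (α₁ sA) := dist_comm _ _
      rw [hC₁] at h1
      linarith [hqAd]
  -- endgame: synchronization
  obtain ⟨Nx, hNx⟩ := tendx (C₀ + dist (γ 0) (y 0) + 1)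
  obtain ⟨Ny, hNy⟩ := tendy (C₀ + dist (γ 0) (x 0) + 1)
  set N₀ := max Nx Ny with hN₀def
  have hNxN : Nx ≤ N₀ := le_max_left _ _
  have hNyN : Ny ≤ N₀ := le_max_right _ _
  have pairs : ∀ m : ℕ, ∃ kk ll : ℕ, K ≤ kk ∧ K ≤ ll ∧ dist (x kk) (y ll) ≤ C₀ ∧ m ≤ kk := by
    intro m
    obtain ⟨kk, ll, h1, h2, h3, h4⟩ := cross (dist (γ 0) (x 0) + S*m + 1)
    refine ⟨kk, ll, h1, h2, h3, ?_⟩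
    have h5 : dist (γ 0) (x kk) ≤ dist (γ 0) (x 0) + kk*S := by
      have h6 := steps_bound hxstep 0 kk
      rw [Nat.zero_add] at h6
      linarith [dist_triangle (γ 0) (x 0) (x kk)]
    by_contra hm
    push_neg at hm
    have h8 : (kk:ℝ) + 1 ≤ (m:ℝ) := by exact_mod_cast hm
    nlinarith [mul_le_mul_of_nonneg_right (by linarith : (kk:ℝ) ≤ (m:ℝ) - 1) hS0]
  have shiftbd : ∀ kk ll : ℕ, dist (x kk) (y ll) ≤ C₀ → kk ≤ ll + N₀ ∧ ll ≤ kk + N₀ := by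
    intro kk ll hd
    constructor
    · by_contra hcon
      push_neg at hcon
      have h1 : dist (x (kk - ll)) (y 0) ≤ dist (x ((kk - ll) + ll)) (y (0 + ll)) :=
        orbit_mono hf hx hy (kk - ll) 0 ll
      rw [show (kk - ll) + ll = kk from by omega, Nat.zero_add] at h1
      have h4 := hNx (kk - ll) (by omega)
      have h5 := dist_triangle (γ 0) (y 0) (x (kk - ll))
      have h6 := dist_comm (y 0) (x (kk - ll))
      linarith
    · by_contra hcon
      push_neg at hcon
      have h1 : dist (x 0) (y (ll - kk)) ≤ dist (x (0 + kk)) (y ((ll - kk) + kk)) :=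
        orbit_mono hf hx hy 0 (ll - kk) kk
      rw [show (ll - kk) + kk = ll from by omega, Nat.zero_add] at h1
      have h4 := hNy (ll - kk) (by omega)
      have h5 := dist_triangle (γ 0) (x 0) (y (ll - kk))
      have h6 := dist_comm (x 0) (y (ll - kk))
      linarith
  choose kkf llf hkkK hllK hdC hmk using pairs
  have hσb : ∀ m, llf m + N₀ - kkf m ≤ 2*N₀ := by
    intro m
    have := shiftbd (kkf m) (llf m) (hdC m)
    omega
  obtain ⟨s, hs2, hsinf⟩ := pigeon (fun m => llf m + N₀ - kkf m) (2*N₀) hσb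
  rcases le_or_gt N₀ s with hsN | hsN
  · -- y is shifted forward by js = s - N₀
    have hclaim : ∀ m : ℕ, dist (x m) (y (m + (s - N₀))) ≤ C₀ := by
      intro m
      obtain ⟨m', hm', hσm'⟩ := hsinf m
      have h2 := shiftbd (kkf m') (llf m') (hdC m')
      have h1 : llf m' = kkf m' + (s - N₀) := by omega
      have h3 : m ≤ kkf m' := le_trans hm' (hmk m')
      have h4 := orbit_mono hf hx hy m (m + (s - N₀)) (kkf m' - m)
      rw [show m + (kkf m' - m) = kkf m' from by omega,
          show m + (s - N₀) + (kkf m' - m) = llf m' from by omega] at h4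
      exact le_trans h4 (hdC m')
    refine ⟨C₀ + (N₀:ℝ)*S, fun m => ?_⟩
    have h5 : dist (y (m + (s - N₀))) (y m) ≤ (s - N₀ : ℕ) * S := by
      rw [dist_comm]
      exact steps_bound hystep m (s - N₀)
    have h6 : ((s - N₀ : ℕ):ℝ) ≤ (N₀:ℝ) := by exact_mod_cast (by omega : s - N₀ ≤ N₀)
    have h7 : ((s - N₀:ℕ):ℝ)*S ≤ (N₀:ℝ)*S := mul_le_mul_of_nonneg_right h6 hS0
    linarith [dist_triangle (x m) (y (m + (s - N₀))) (y m), hclaim m]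
  · -- x is shifted forward by is = N₀ - s
    have hclaim : ∀ m : ℕ, dist (x (m + (N₀ - s))) (y m) ≤ C₀ := by
      intro m
      obtain ⟨m', hm', hσm'⟩ := hsinf (m + N₀)
      have h2 := shiftbd (kkf m') (llf m') (hdC m')
      have h1 : kkf m' = llf m' + (N₀ - s) := by omega
      have h3 : m ≤ llf m' := by
        have := hmk m'
        omega
      have h4 := orbit_mono hf hx hy (m + (N₀ - s)) m (llf m' - m)
      rw [show m + (N₀ - s) + (llf m' - m) = kkf m' from by omega,
          show m + (llf m' - m) = llf m' from by omega] at h4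
      exact le_trans h4 (hdC m')
    refine ⟨C₀ + (N₀:ℝ)*S, fun m => ?_⟩
    have h5 : dist (x m) (x (m + (N₀ - s))) ≤ (N₀ - s : ℕ) * S := steps_bound hxstep m (N₀ - s)
    have h6 : ((N₀ - s : ℕ):ℝ) ≤ (N₀:ℝ) := by exact_mod_cast (by omega : N₀ - s ≤ N₀)
    have h7 : ((N₀ - s:ℕ):ℝ)*S ≤ (N₀:ℝ)*S := mul_le_mul_of_nonneg_right h6 hS0
    linarith [dist_triangle (x m) (x (m + (N₀ - s))) (y m), hclaim m]
end

section
/- Let (X,d) be a proper geodesic Gromov hyperbolic metric space whose horofunction compactification X̄^H is equivalent to its Gromov compactification X̄^G. Let f : X → X be a non-expanding map and η ∈ ∂_G X a boundary regular fixed point of f, with (base-point independent) dilation λ_η(f). Then for all n ≥ 1 one has λ_η(f^n) = λ_η(f)^n. -/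
noncomputable section

open Filter Topology Metric Set

namespace DilIter

variable {X : Type*} [MetricSpace X] {γ : ℝ → X}

/-- Busemann function of the ray `γ`, normalized at `γ 0`. -/
def bus (γ : ℝ → X) (x : X) : ℝ := ⨅ n : ℕ, (dist x (γ n) - n)

def phi (γ : ℝ → X) (x : X) : ℝ := (dist x (γ 0) - bus γ x) / 2

def psi (γ : ℝ → X) (x : X) : ℝ := dist x (γ 0) + bus γ x

lemma ray_dist (hray : IsGeodesicRay γ) {s t : ℝ} (hs : 0 ≤ s) (ht : 0 ≤ t) :
    dist (γ s) (γ t) = |s - t| := hray s t hs ht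

lemma ray_dist0 (hray : IsGeodesicRay γ) {t : ℝ} (ht : 0 ≤ t) :
    dist (γ 0) (γ t) = t := by
  rw [hray 0 t le_rfl ht]; rw [abs_sub_comm, sub_zero, abs_of_nonneg ht]

lemma term_antitone (hray : IsGeodesicRay γ) (x : X) {s t : ℝ} (hs : 0 ≤ s) (hst : s ≤ t) :
    dist x (γ t) - t ≤ dist x (γ s) - s := by
  have h1 : dist x (γ t) ≤ dist x (γ s) + dist (γ s) (γ t) := dist_triangle _ _ _
  have h2 : dist (γ s) (γ t) = t - s := by
    rw [hray s t hs (hs.trans hst), abs_of_nonpos (by linarith), neg_sub]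
  linarith

lemma term_bddBelow (hray : IsGeodesicRay γ) (x : X) :
    BddBelow (range fun n : ℕ => dist x (γ n) - n) := by
  refine ⟨-dist x (γ 0), ?_⟩
  rintro r ⟨n, rfl⟩
  have h1 : dist (γ 0) (γ n) = n := ray_dist0 hray (Nat.cast_nonneg n)
  have h2 : dist (γ 0) (γ n) ≤ dist (γ 0) x + dist x (γ n) := dist_triangle _ _ _
  rw [dist_comm (γ 0) x] at h2
  simp only [mem_setOf_eq]
  linarith

lemma bus_le (hray : IsGeodesicRay γ) (x : X) (n : ℕ) :
    bus γ x ≤ dist x (γ n) - n := ciInf_le (term_bddBelow hray x) n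

lemma neg_dist_le_bus (hray : IsGeodesicRay γ) (x : X) :
    -dist x (γ 0) ≤ bus γ x := by
  refine le_ciInf fun n => ?_
  have h1 : dist (γ 0) (γ n) = n := ray_dist0 hray (Nat.cast_nonneg n)
  have h2 : dist (γ 0) (γ n) ≤ dist (γ 0) x + dist x (γ n) := dist_triangle _ _ _
  rw [dist_comm (γ 0) x] at h2
  linarith

lemma psi_nonneg (hray : IsGeodesicRay γ) (x : X) : 0 ≤ psi γ x := by
  have := neg_dist_le_bus hray x; unfold psi; linarith

lemma phi_le_dist (hray : IsGeodesicRay γ) (x : X) : phi γ x ≤ dist x (γ 0) := by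
  have := neg_dist_le_bus hray x; unfold phi; linarith

lemma tendsto_bus_nat (hray : IsGeodesicRay γ) (x : X) :
    Tendsto (fun n : ℕ => dist x (γ n) - n) atTop (nhds (bus γ x)) := by
  refine tendsto_atTop_ciInf ?_ (term_bddBelow hray x)
  intro m n hmn
  exact term_antitone hray x (Nat.cast_nonneg m) (by exact_mod_cast hmn)

lemma tendsto_bus_real (hray : IsGeodesicRay γ) (x : X) :
    Tendsto (fun t : ℝ => dist x (γ t) - t) atTop (nhds (bus γ x)) := by
  apply tendsto_of_tendsto_of_tendsto_of_le_of_le'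
    (g := fun _ : ℝ => bus γ x) (h := fun t : ℝ => dist x (γ ⌊t⌋₊) - ⌊t⌋₊)
  · exact tendsto_const_nhds
  · exact (tendsto_bus_nat hray x).comp tendsto_nat_floor_atTop
  · filter_upwards [eventually_ge_atTop (0:ℝ)] with t ht
    have h1 : bus γ x ≤ dist x (γ ⌈t⌉₊) - (⌈t⌉₊ : ℝ) := bus_le hray x _
    have h2 : dist x (γ ⌈t⌉₊) - (⌈t⌉₊:ℝ) ≤ dist x (γ t) - t :=
      term_antitone hray x ht (Nat.le_ceil t)
    linarith
  · filter_upwards [eventually_ge_atTop (0:ℝ)] with t ht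
    exact term_antitone hray x (Nat.cast_nonneg _) (Nat.floor_le ht)

lemma bus_ray (hray : IsGeodesicRay γ) {t : ℝ} (ht : 0 ≤ t) : bus γ (γ t) = -t := by
  refine tendsto_nhds_unique (tendsto_bus_nat hray (γ t)) ?_
  have : ∀ᶠ n : ℕ in atTop, dist (γ t) (γ n) - (n:ℝ) = -t := by
    filter_upwards [eventually_ge_atTop ⌈t⌉₊] with n hn
    have htn : t ≤ (n:ℝ) := le_trans (Nat.le_ceil t) (by exact_mod_cast hn)
    rw [hray t n ht (Nat.cast_nonneg n), abs_of_nonpos (by linarith), neg_sub]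
    ring
  exact Tendsto.congr' (this.mono fun n h => h.symm) tendsto_const_nhds


lemma tendsto_gromovProd (hray : IsGeodesicRay γ) (x : X) :
    Tendsto (fun t : ℝ => gromovProd (γ 0) x (γ t)) atTop (nhds (phi γ x)) := by
  have h1 : Tendsto (fun t : ℝ => (dist x (γ 0) - (dist x (γ t) - t)) / 2) atTop
      (nhds (phi γ x)) := by
    unfold phi
    exact (tendsto_const_nhds.sub (tendsto_bus_real hray x)).div_const 2
  refine Tendsto.congr' ?_ h1
  filter_upwards [eventually_ge_atTop (0:ℝ)] with t ht
  unfold gromovProd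
  rw [ray_dist0 hray ht, dist_comm (γ 0) x]
  ring

lemma phi_ray (hray : IsGeodesicRay γ) {t : ℝ} (ht : 0 ≤ t) : phi γ (γ t) = t := by
  unfold phi
  rw [bus_ray hray ht, dist_comm, ray_dist0 hray ht]
  ring

lemma gromovFilter_eq (hray : IsGeodesicRay γ) :
    gromovFilter γ = Filter.comap (phi γ) atTop := by
  have hset : ∀ M : ℝ,
      {x : X | M ≤ Filter.liminf (fun t : ℝ => gromovProd (γ 0) x (γ t)) Filter.atTop}
        = phi γ ⁻¹' Ici M := by
    intro M; ext x
    simp only [mem_setOf_eq, mem_preimage, mem_Ici]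
    rw [(tendsto_gromovProd hray x).liminf_eq]
  have hcom : Filter.comap (phi γ) atTop = ⨅ M : ℝ, Filter.principal (phi γ ⁻¹' Ici M) := by
    rw [Filter.atTop, Filter.comap_iInf]
    simp only [Filter.comap_principal]
  rw [hcom]
  unfold gromovFilter
  exact iInf_congr fun M => by rw [hset M]

lemma tendsto_gromovFilter_iff (hray : IsGeodesicRay γ) {ι : Type*} {l : Filter ι}
    {w : ι → X} :
    Tendsto w l (gromovFilter γ) ↔ Tendsto (fun i => phi γ (w i)) l atTop := by
  rw [gromovFilter_eq hray, Filter.tendsto_comap_iff]; rfl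

lemma ray_tendsto (hray : IsGeodesicRay γ) :
    Tendsto (fun n : ℕ => γ n) atTop (gromovFilter γ) := by
  rw [tendsto_gromovFilter_iff hray]
  have : ∀ n : ℕ, phi γ (γ n) = n := fun n => phi_ray hray (Nat.cast_nonneg n)
  simp only [this]
  exact tendsto_natCast_atTop_atTop

lemma gromovFilter_neBot (hray : IsGeodesicRay γ) : (gromovFilter γ).NeBot := by
  rw [gromovFilter_eq hray]
  refine Filter.comap_neBot fun t ht => ?_
  obtain ⟨a, ha⟩ := mem_atTop_sets.1 ht
  refine ⟨γ (max a 0), ha _ ?_⟩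
  rw [phi_ray hray (le_max_right a 0)]
  exact le_max_left a 0

lemma gromovFilter_countably_generated (hray : IsGeodesicRay γ) :
    (gromovFilter γ).IsCountablyGenerated := by
  rw [gromovFilter_eq hray]; infer_instance

lemma mem_gromovFilter (hray : IsGeodesicRay γ) (M : ℝ) :
    phi γ ⁻¹' Ici M ∈ gromovFilter γ := by
  rw [gromovFilter_eq hray]
  exact Filter.preimage_mem_comap (mem_atTop M)


lemma raywitness_dist (hray : IsGeodesicRay γ) :
    Tendsto (fun n : ℕ => dist (γ 0) (γ n)) atTop atTop := by
  have h0 : ∀ n : ℕ, dist (γ 0) (γ n) = (n : ℝ) :=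
    fun n => ray_dist0 hray (Nat.cast_nonneg n)
  simp only [h0]
  exact tendsto_natCast_atTop_atTop

lemma raywitness_lim (hray : IsGeodesicRay γ) (y : X) :
    Tendsto (fun n : ℕ => dist (γ n) y - dist (γ n) (γ 0)) atTop (nhds (bus γ y)) := by
  have h1 : ∀ n : ℕ, dist (γ n) y - dist (γ n) (γ 0) = dist y (γ n) - (n:ℝ) := by
    intro n
    rw [dist_comm (γ n) y, dist_comm (γ n) (γ 0), ray_dist0 hray (Nat.cast_nonneg n)]
  simp only [h1]
  exact tendsto_bus_nat hray y

lemma bus_horofunction (hray : IsGeodesicRay γ) : IsHorofunctionAt (γ 0) (bus γ) := by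
  constructor
  · have := bus_ray hray (le_refl (0:ℝ)); simpa using this
  · exact ⟨fun n : ℕ => γ n, raywitness_dist hray, raywitness_lim hray⟩

lemma bus_projects (hray : IsGeodesicRay γ) : HoroProjectsTo (γ 0) (bus γ) γ :=
  ⟨fun n : ℕ => γ n, raywitness_dist hray, raywitness_lim hray, ray_tendsto hray⟩

/-- Key consequence of equivalence of compactifications. -/
lemma limit_of_tendsto [ProperSpace X] (hray : IsGeodesicRay γ)
    (hequiv : CompactificationsEquivalent X)
    (v : ℕ → X) (hv : Tendsto v atTop (gromovFilter γ)) (y : X) :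
    Tendsto (fun j => dist (v j) y - dist (v j) (γ 0)) atTop (nhds (bus γ y)) := by
  set p := γ 0 with hp
  by_contra hcon
  rw [Metric.tendsto_atTop] at hcon
  push_neg at hcon
  obtain ⟨ε, εpos, hfreq⟩ := hcon
  obtain ⟨ns, hns, hfar⟩ := Filter.extraction_of_frequently_atTop
    (Filter.frequently_atTop.2 hfreq)
  set u : ℕ → X := v ∘ ns with hu_def
  have hu : Tendsto u atTop (gromovFilter γ) := hv.comp hns.tendsto_atTop
  haveI : Nonempty X := ⟨p⟩
  set D : ℕ → X := TopologicalSpace.denseSeq X with hD_def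
  have hD : DenseRange D := TopologicalSpace.denseRange_denseSeq X
  set K : Set (ℕ → ℝ) := univ.pi fun k => Icc (-(dist p (D k))) (dist p (D k)) with hK_def
  have hK : IsCompact K := isCompact_univ_pi fun k => isCompact_Icc
  set G : ℕ → ℕ → ℝ := fun j k => dist (u j) (D k) - dist (u j) p with hG_def
  have hGmem : ∀ j, G j ∈ K := by
    intro j
    refine mem_univ_pi.2 fun k => ?_
    have habs : |dist (u j) (D k) - dist (u j) p| ≤ dist p (D k) := by
      rw [dist_comm (u j) (D k), dist_comm (u j) p, dist_comm p (D k)]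
      exact abs_dist_sub_le _ _ _
    rw [abs_le] at habs
    exact ⟨habs.1, habs.2⟩
  obtain ⟨a, -, ms, hms, hGms⟩ := hK.tendsto_subseq hGmem
  have hGk : ∀ k, Tendsto (fun j => G (ms j) k) atTop (nhds (a k)) := by
    intro k
    exact (tendsto_pi_nhds.1 hGms) k
  set w : ℕ → X := u ∘ ms with hw_def
  -- Cauchy at every point
  have hcauchy : ∀ z : X, CauchySeq (fun j => dist (w j) z - dist (w j) p) := by
    intro z
    rw [Metric.cauchySeq_iff]
    intro ε' ε'pos
    obtain ⟨k, hk⟩ : ∃ k, dist z (D k) < ε' / 4 := hD.exists_dist_lt z (by positivity)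
    have hcau : CauchySeq (fun j => G (ms j) k) := (hGk k).cauchySeq
    rw [Metric.cauchySeq_iff] at hcau
    obtain ⟨N, hN⟩ := hcau (ε'/2) (by positivity)
    refine ⟨N, fun m hm n hn => ?_⟩
    have h1 := hN m hm n hn
    rw [Real.dist_eq] at h1 ⊢
    have e1 : ∀ j, |(dist (w j) z - dist (w j) p) - G (ms j) k| ≤ dist z (D k) := by
      intro j
      have heq1 : (dist (w j) z - dist (w j) p) - G (ms j) k
          = dist (w j) z - dist (w j) (D k) := by
        show (dist (u (ms j)) z - dist (u (ms j)) p)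
          - (dist (u (ms j)) (D k) - dist (u (ms j)) p)
          = dist (u (ms j)) z - dist (u (ms j)) (D k)
        ring
      rw [heq1, dist_comm (w j) z, dist_comm (w j) (D k)]
      exact abs_dist_sub_le _ _ _
    calc |(dist (w m) z - dist (w m) p) - (dist (w n) z - dist (w n) p)|
        ≤ |(dist (w m) z - dist (w m) p) - G (ms m) k| + |G (ms m) k - G (ms n) k|
          + |G (ms n) k - (dist (w n) z - dist (w n) p)| := by
            have := abs_sub_le ((dist (w m) z - dist (w m) p)) (G (ms m) k)
              ((dist (w n) z - dist (w n) p))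
            have h3 := abs_sub_le (G (ms m) k) (G (ms n) k)
              ((dist (w n) z - dist (w n) p))
            linarith
      _ < ε' := by
          have e2 := e1 m
          have e3 : |G (ms n) k - (dist (w n) z - dist (w n) p)| ≤ dist z (D k) := by
            rw [abs_sub_comm]; exact e1 n
          linarith
  have hex : ∀ z : X, ∃ l : ℝ, Tendsto (fun j => dist (w j) z - dist (w j) p) atTop (nhds l) :=
    fun z => cauchySeq_tendsto_of_complete (hcauchy z)
  choose h' hh' using hex
  -- h' is a horofunction at p projecting to γ
  have hwF : Tendsto w atTop (gromovFilter γ) := hu.comp hms.tendsto_atTop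
  have hdistw : Tendsto (fun j => dist p (w j)) atTop atTop := by
    have hphi : Tendsto (fun j => phi γ (w j)) atTop atTop :=
      (tendsto_gromovFilter_iff hray).1 hwF
    refine tendsto_atTop_mono (fun j => ?_) hphi
    rw [dist_comm]
    exact phi_le_dist hray (w j)
  have h'p : h' p = 0 := by
    refine tendsto_nhds_unique (hh' p) ?_
    simp only [sub_self]
    exact tendsto_const_nhds
  have hhoro' : IsHorofunctionAt p h' := ⟨h'p, w, hdistw, hh'⟩
  have hproj' : HoroProjectsTo p h' γ := ⟨w, hdistw, hh', hwF⟩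
  have heq : h' = bus γ :=
    hequiv p h' (bus γ) hhoro' (bus_horofunction hray)
      ⟨γ, hray, hproj', bus_projects hray⟩
  -- contradiction
  have hlim : Tendsto (fun j => dist (w j) y - dist (w j) p) atTop (nhds (bus γ y)) := by
    rw [← heq]; exact hh' y
  rw [Metric.tendsto_atTop] at hlim
  obtain ⟨N, hN⟩ := hlim ε εpos
  have := hN N le_rfl
  exact absurd this (not_lt.2 (hfar (ms N)))


lemma bus_lt_term (hray : IsGeodesicRay γ) (x : X) :
    ∃ n : ℕ, dist x (γ n) - n < bus γ x + 1 :=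
  exists_lt_of_ciInf_lt (lt_add_one _)

/-- Points with small `psi` lie near the ray. -/
lemma near_ray (hray : IsGeodesicRay γ) (hgeo : IsGeodesicSpace X)
    (hhyp : GromovHyperbolic X) :
    ∃ R : ℝ, 0 < R ∧ ∀ y : X, psi γ y ≤ 1 → ∃ t : ℝ, 0 ≤ t ∧ dist y (γ t) < R := by
  obtain ⟨δ, δ0, hδ⟩ := hhyp
  refine ⟨2*δ + 4, by linarith, fun y hy => ?_⟩
  set p := γ 0 with hp
  by_cases hsmall : dist (γ 0) y ≤ δ + 3
  · exact ⟨0, le_rfl, by rw [dist_comm]; linarith⟩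
  push_neg at hsmall
  have hbusy : bus γ y ≤ 1 - dist y (γ 0) := by unfold psi at hy; linarith
  obtain ⟨N, hN⟩ := bus_lt_term hray y
  set T : ℝ := (N : ℝ) with hT
  have hT0 : 0 ≤ T := Nat.cast_nonneg N
  have hdT : dist y (γ T) ≤ T + 2 - dist y (γ 0) := by
    have := hN
    rw [dist_comm y (γ 0)] at hbusy ⊢
    linarith
  obtain ⟨β, hβ⟩ := hgeo (γ T) y
  obtain ⟨g, hg⟩ := hgeo (γ 0) y
  have hrayT : IsGeodesicFromTo γ (γ 0) (γ T) := by
    refine ⟨rfl, ?_, fun s t hs ht => hray s t hs.1 ht.1⟩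
    rw [ray_dist0 hray hT0]
  set t₀ : ℝ := dist (γ 0) y - (δ + 3) with ht₀
  have ht₀mem : t₀ ∈ Set.Icc (0:ℝ) (dist (γ 0) y) := ⟨by linarith, by linarith⟩
  obtain ⟨q, hq, hqd⟩ := hδ (γ 0) (γ T) y γ β g hrayT hβ hg t₀ ht₀mem
  -- distances of the comparison point m = g t₀
  have hdpm : dist (γ 0) (g t₀) = t₀ := by
    have h0mem : (0:ℝ) ∈ Set.Icc (0:ℝ) (dist (γ 0) y) := ⟨le_rfl, dist_nonneg⟩
    have := hg.2.2 0 t₀ h0mem ht₀mem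
    rw [hg.1] at this
    rw [this, abs_sub_comm, sub_zero, abs_of_nonneg ht₀mem.1]
  have hdmy : dist (g t₀) y = δ + 3 := by
    have hDmem : dist (γ 0) y ∈ Set.Icc (0:ℝ) (dist (γ 0) y) := ⟨dist_nonneg, le_rfl⟩
    have := hg.2.2 t₀ (dist (γ 0) y) ht₀mem hDmem
    rw [hg.2.1] at this
    rw [this, abs_of_nonpos (by linarith)]
    simp only [ht₀]; ring
  rcases hq with ⟨s, hs, rfl⟩ | ⟨s, hs, rfl⟩
  · -- on the ray: done
    rw [ray_dist0 hray hT0] at hs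
    refine ⟨s, hs.1, ?_⟩
    calc dist y (γ s) ≤ dist y (g t₀) + dist (g t₀) (γ s) := dist_triangle _ _ _
      _ ≤ (δ + 3) + δ := by
          rw [dist_comm y (g t₀)]
          exact add_le_add hdmy.le hqd
      _ < 2*δ + 4 := by linarith
  · -- on the side [γ T, y]: contradiction
    exfalso
    have hβ0 : dist (γ T) (β s) = s := by
      have h0mem : (0:ℝ) ∈ Set.Icc (0:ℝ) (dist (γ T) y) := ⟨le_rfl, dist_nonneg⟩
      have := hβ.2.2 0 s h0mem hs
      rw [hβ.1] at this
      rw [this, abs_sub_comm, sub_zero, abs_of_nonneg hs.1]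
    have h1 : dist (γ 0) (β s) ≤ t₀ + δ := by
      calc dist (γ 0) (β s) ≤ dist (γ 0) (g t₀) + dist (g t₀) (β s) := dist_triangle _ _ _
        _ ≤ t₀ + δ := by rw [hdpm]; exact add_le_add le_rfl hqd
    have h2 : T - s ≤ dist (γ 0) (β s) := by
      have := dist_triangle (γ 0) (β s) (γ T)
      rw [dist_comm (β s) (γ T), hβ0] at this
      have hpT : dist (γ 0) (γ T) = T := ray_dist0 hray hT0
      linarith
    have h3 : s ≤ dist (γ T) y := hs.2
    have h4 : dist (γ T) y ≤ T + 2 - dist y (γ 0) := by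
      rw [dist_comm (γ T) y]; exact hdT
    rw [dist_comm y (γ 0)] at h4
    -- T - s ≥ dist (γ0) y - 2, but also ≤ t₀ + δ = dist (γ0) y - 3
    have : dist (γ 0) y - 2 ≤ dist (γ 0) y - 3 := by
      simp only [ht₀] at h1
      linarith
    linarith


lemma psi_ray (hray : IsGeodesicRay γ) {t : ℝ} (ht : 0 ≤ t) : psi γ (γ t) = 0 := by
  unfold psi
  rw [bus_ray hray ht, dist_comm, ray_dist0 hray ht]
  ring

lemma tendsto_L_helper {a b : ℕ → ℝ} {L : ℝ} (hub : ∀ j, a j ≤ L + b j)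
    (hb : Tendsto b atTop (nhds 0))
    (hlb : ∀ ε : ℝ, 0 < ε → ∀ᶠ j in atTop, L - ε < a j) :
    Tendsto a atTop (nhds L) := by
  rw [Metric.tendsto_nhds]
  intro ε hε
  have h1 := hlb ε hε
  have h2 : ∀ᶠ j in atTop, |b j| < ε := by
    have := Metric.tendsto_nhds.1 hb ε hε
    simpa [Real.dist_eq] using this
  filter_upwards [h1, h2] with j hj1 hj2
  rw [Real.dist_eq, abs_lt]
  constructor
  · linarith
  · have := le_abs_self (b j)
    have := hub j
    linarith


end DilIter

end

open Filter Topology Metric Set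

open DilIter in
/-- **Proposition (dilation of iterates under equivalent compactifications).**
Let `X` be a proper geodesic Gromov hyperbolic metric space whose horofunction
compactification is equivalent to its Gromov compactification. Let `f : X → X` be
non-expanding and `η = [γ]` a BRFP of `f` with dilation `λ_η(f)` (so
`log λ_η(f) = L`). Then for all `n ≥ 1`, `λ_η(f^n) = λ_η(f)^n`,
i.e. `log λ_η(f^n) = n·L`. -/
theorem dilation_of_iterates_equiv_compactifications
    {X : Type*} [MetricSpace X] [ProperSpace X]
    (hgeo : IsGeodesicSpace X) (hhyp : GromovHyperbolic X)
    (hequiv : CompactificationsEquivalent X)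
    (f : X → X) (hf : Nonexpanding f)
    (γ : ℝ → X) (hη : IsBRFP f γ)
    (L : ℝ) (hL : HasLogDilation (γ 0) γ f L) :
    ∀ n : ℕ, 1 ≤ n → HasLogDilation (γ 0) γ (f^[n]) ((n : ℝ) * L) := by
  obtain ⟨hray, -, hglim⟩ := hη
  set p : X := γ 0 with hp
  set F : Filter X := gromovFilter γ with hF
  haveI hFne : F.NeBot := by
    rw [hF, gromovFilter_eq hray]
    refine Filter.comap_neBot fun t ht => ?_
    obtain ⟨a, ha⟩ := mem_atTop_sets.1 ht
    exact ⟨γ (max a 0), ha _ (by rw [phi_ray hray (le_max_right a 0)]; exact le_max_left a 0)⟩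
  haveI hFcg : F.IsCountablyGenerated := gromovFilter_countably_generated hray
  unfold HasLogDilation logDilation at hL
  -- eventual lower bound for the one-step displacement
  have hlow : ∀ ε : ℝ, 0 < ε → ∀ᶠ x in F, L - ε < dist x p - dist (f x) p := by
    intro ε hε
    have hlt : ((L - ε : ℝ) : EReal)
        < liminf (fun x => ((dist x p - dist (f x) p : ℝ) : EReal)) F := by
      rw [hL]
      exact_mod_cast (by linarith : L - ε < L)
    have := eventually_lt_of_lt_liminf hlt
    filter_upwards [this] with x hx
    exact_mod_cast hx
  -- realizing sequence for the dilation
  have hreal : ∃ w : ℕ → X, Tendsto w atTop F ∧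
      ∀ m : ℕ, dist (w m) p - dist (f (w m)) p < L + 1/(m+1) := by
    have hex : ∀ m : ℕ, ∃ x : X, (m:ℝ) ≤ phi γ x ∧
        dist x p - dist (f x) p < L + 1/(m+1) := by
      intro m
      by_contra hcon
      push_neg at hcon
      have hev : ∀ᶠ x in F, ((L + 1/(m+1) : ℝ) : EReal)
          ≤ ((dist x p - dist (f x) p : ℝ) : EReal) := by
        filter_upwards [mem_gromovFilter hray m] with x hx
        exact_mod_cast hcon x hx
      have := le_liminf_of_le (by isBoundedDefault) hev
      rw [hL] at this
      have hle : L + 1/(m+1) ≤ L := by exact_mod_cast this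
      have : (0:ℝ) < 1/(m+1) := by positivity
      linarith
    choose w hw1 hw2 using hex
    refine ⟨w, ?_, hw2⟩
    rw [tendsto_gromovFilter_iff hray]
    exact tendsto_atTop_mono hw1 tendsto_natCast_atTop_atTop
  obtain ⟨w, hwF, hwL⟩ := hreal
  -- KEY: global upper bound for the one-step displacement
  have hkey : ∀ y : X, dist y p - dist (f y) p ≤ L + psi γ y := by
    intro y
    have hFy := limit_of_tendsto hray hequiv w hwF y
    refine le_of_forall_pos_le_add fun ε hε => ?_
    have h1 : ∀ᶠ m : ℕ in atTop, dist (w m) y - dist (w m) p < bus γ y + ε/2 := by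
      have := Metric.tendsto_nhds.1 hFy (ε/2) (by positivity)
      filter_upwards [this] with m hm
      rw [Real.dist_eq, abs_lt] at hm
      linarith [hm.2]
    have h2 : ∀ᶠ m : ℕ in atTop, (1:ℝ)/(m+1) < ε/2 := by
      have : Tendsto (fun m : ℕ => (1:ℝ)/(m+1)) atTop (nhds 0) :=
        tendsto_one_div_add_atTop_nhds_zero_nat
      have := Metric.tendsto_nhds.1 this (ε/2) (by positivity)
      filter_upwards [this] with m hm
      rw [Real.dist_eq, abs_lt] at hm
      linarith [hm.2]
    obtain ⟨m, hm1, hm2⟩ := (h1.and h2).exists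
    -- pointwise estimate
    have hnl : dist (f (w m)) p - dist (f (w m)) (f y) ≤ dist (f y) p := by
      have := dist_triangle (f (w m)) (f y) p
      rw [dist_comm (f y) p] at this ⊢
      linarith [dist_triangle (f (w m)) (f y) p]
    have hne : dist (f (w m)) (f y) ≤ dist (w m) y := hf (w m) y
    have hwm := hwL m
    unfold psi
    -- dist (f y) p ≥ dist (f (w m)) p - dist (w m) y
    --            ≥ dist (w m) p - (L + 1/(m+1)) - dist (w m) y
    have : dist y p - dist (f y) p
        ≤ dist y p + (dist (w m) y - dist (w m) p) + (L + 1/(m+1)) := by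
      have hd : dist (w m) p - (L + 1/(m+1)) - dist (w m) y ≤ dist (f y) p := by
        linarith
      linarith
    have hsame : dist y (γ 0) = dist y p := rfl
    linarith
  -- the displacement along the ray converges to L
  have hrayF : Tendsto (fun j : ℕ => γ (j:ℝ)) atTop F := ray_tendsto hray
  have hseqlow : ∀ (z : ℕ → X), Tendsto z atTop F → ∀ ε : ℝ, 0 < ε →
      ∀ᶠ j : ℕ in atTop, L - ε < dist (z j) p - dist (f (z j)) p :=
    fun z hz ε hε => hz.eventually (hlow ε hε)
  have hu1γ : Tendsto (fun j : ℕ => dist (γ (j:ℝ)) p - dist (f (γ (j:ℝ))) p)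
      atTop (nhds L) := by
    refine tendsto_L_helper (b := fun j : ℕ => psi γ (γ (j:ℝ)))
      (fun j => hkey (γ (j:ℝ))) ?_ (hseqlow _ hrayF)
    have hz : ∀ j : ℕ, psi γ (γ (j:ℝ)) = 0 := fun j => psi_ray hray (Nat.cast_nonneg j)
    simp only [hz]
    exact tendsto_const_nhds
  -- f(γ j) tends to the boundary point
  have hasymp : AsympRays γ γ := ⟨0, fun t _ => by simp⟩
  have hregion1 : ∀ j : ℕ, InGeodesicRegion γ 1 (γ (j:ℝ)) :=
    fun j => ⟨(j:ℝ), Nat.cast_nonneg j, by simp⟩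
  have hfγ : Tendsto (fun j : ℕ => f (γ (j:ℝ))) atTop F :=
    hglim γ hray hasymp 1 one_pos (fun j : ℕ => γ (j:ℝ)) hregion1 hrayF
  -- F6: the Busemann function decreases by at least -L along f
  have hbusf : ∀ x : X, bus γ (f x) ≤ bus γ x + L := by
    intro x
    have hlim := limit_of_tendsto hray hequiv (fun j : ℕ => f (γ (j:ℝ))) hfγ (f x)
    have hRHS : Tendsto (fun j : ℕ => (dist x (γ (j:ℝ)) - (j:ℝ))
        + (dist (γ (j:ℝ)) p - dist (f (γ (j:ℝ))) p)) atTop (nhds (bus γ x + L)) :=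
      (tendsto_bus_nat hray x).add hu1γ
    refine le_of_tendsto_of_tendsto' hlim hRHS fun j => ?_
    have h1 : dist (f (γ (j:ℝ))) (f x) ≤ dist (γ (j:ℝ)) x := hf _ _
    have h2 : dist (γ (j:ℝ)) p = (j:ℝ) := by
      rw [hp, dist_comm]; exact ray_dist0 hray (Nat.cast_nonneg j)
    rw [dist_comm (γ (j:ℝ)) x] at h1
    have hsame : dist (f (γ (j:ℝ))) (γ 0) = dist (f (γ (j:ℝ))) p := rfl
    linarith
  -- step inequality for psi
  have hstep : ∀ y : X, psi γ (f y) ≤ psi γ y + L - (dist y p - dist (f y) p) := by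
    intro y
    have h1 := hbusf y
    unfold psi
    have hs1 : dist (f y) (γ 0) = dist (f y) p := rfl
    have hs2 : dist y (γ 0) = dist y p := rfl
    linarith
  -- nonexpanding iterates
  have hfn : ∀ (n : ℕ) (x y : X), dist (f^[n] x) (f^[n] y) ≤ dist x y := by
    intro n
    induction n with
    | zero => intro x y; simp
    | succ n ih =>
        intro x y
        rw [Function.iterate_succ_apply', Function.iterate_succ_apply']
        exact le_trans (hf _ _) (ih x y)
  -- master inequality
  have hmaster : ∀ (n : ℕ) (x : X), dist x p - dist (f^[n] x) p
      ≤ (n:ℝ) * L + psi γ x - psi γ (f^[n] x) := by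
    intro n
    induction n with
    | zero => intro x; simp
    | succ n ih =>
        intro x
        have h1 := ih x
        have h2 := hstep (f^[n] x)
        rw [Function.iterate_succ_apply']
        push_cast
        linarith
  -- the region lemma
  obtain ⟨R, hRpos, hR⟩ := near_ray hray hgeo hhyp
  -- induction along the orbit of the ray
  have hC : ∀ k : ℕ,
      Tendsto (fun j : ℕ => psi γ (f^[k] (γ (j:ℝ)))) atTop (nhds 0) ∧
      Tendsto (fun j : ℕ => f^[k] (γ (j:ℝ))) atTop F ∧
      Tendsto (fun j : ℕ => dist (f^[k] (γ (j:ℝ))) p - dist (f (f^[k] (γ (j:ℝ)))) p)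
        atTop (nhds L) := by
    intro k
    induction k with
    | zero =>
        refine ⟨?_, by simpa using hrayF, by simpa using hu1γ⟩
        have hz : ∀ j : ℕ, psi γ (f^[0] (γ (j:ℝ))) = 0 := fun j => by
          simpa using psi_ray hray (Nat.cast_nonneg j)
        simp only [hz]
        exact tendsto_const_nhds
    | succ k ih =>
        obtain ⟨hψ, hT, hu⟩ := ih
        have hψ' : Tendsto (fun j : ℕ => psi γ (f^[k+1] (γ (j:ℝ)))) atTop (nhds 0) := by
          have hub : ∀ j : ℕ, psi γ (f^[k+1] (γ (j:ℝ)))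
              ≤ psi γ (f^[k] (γ (j:ℝ))) + L
                - (dist (f^[k] (γ (j:ℝ))) p - dist (f (f^[k] (γ (j:ℝ)))) p) := by
            intro j
            rw [Function.iterate_succ_apply']
            exact hstep _
          have hRHS : Tendsto (fun j : ℕ => psi γ (f^[k] (γ (j:ℝ))) + L
              - (dist (f^[k] (γ (j:ℝ))) p - dist (f (f^[k] (γ (j:ℝ)))) p))
              atTop (nhds 0) := by
            have := (hψ.add (tendsto_const_nhds (x := L))).sub hu
            simpa using this
          exact squeeze_zero (fun j => psi_nonneg hray _) hub hRHS
        have hT' : Tendsto (fun j : ℕ => f^[k+1] (γ (j:ℝ))) atTop F := by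
          have hev : ∀ᶠ j : ℕ in atTop, psi γ (f^[k] (γ (j:ℝ))) ≤ 1 :=
            hψ.eventually (eventually_le_nhds one_pos)
          obtain ⟨J, hJ⟩ := eventually_atTop.1 hev
          have hxregion : ∀ j : ℕ, InGeodesicRegion γ R (f^[k] (γ ((j + J : ℕ):ℝ))) :=
            fun j => hR _ (hJ (j + J) (Nat.le_add_left J j))
          have hxF : Tendsto (fun j : ℕ => f^[k] (γ ((j + J : ℕ):ℝ))) atTop F := by
            have := hT.comp (tendsto_add_atTop_nat J)
            exact this
          have h5 := hglim γ hray hasymp R hRpos _ hxregion hxF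
          have h6 : (fun j : ℕ => f (f^[k] (γ ((j + J : ℕ):ℝ))))
              = fun j : ℕ => f^[k+1] (γ ((j + J : ℕ):ℝ)) := by
            funext j
            rw [Function.iterate_succ_apply']
          rw [h6] at h5
          exact (tendsto_add_atTop_iff_nat (f := fun j : ℕ => f^[k+1] (γ (j:ℝ))) J).1 h5
        have hu' : Tendsto (fun j : ℕ => dist (f^[k+1] (γ (j:ℝ))) p
            - dist (f (f^[k+1] (γ (j:ℝ)))) p) atTop (nhds L) :=
          tendsto_L_helper (b := fun j : ℕ => psi γ (f^[k+1] (γ (j:ℝ))))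
            (fun j => hkey _) hψ' (hseqlow _ hT')
        exact ⟨hψ', hT', hu'⟩
  -- telescoping identity
  have htel : ∀ (n : ℕ) (x : X), dist x p - dist (f^[n] x) p
      = ∑ k ∈ Finset.range n, (dist (f^[k] x) p - dist (f (f^[k] x)) p) := by
    intro n
    induction n with
    | zero => intro x; simp
    | succ n ih =>
        intro x
        rw [Finset.sum_range_succ, ← ih x, Function.iterate_succ_apply']
        ring
  -- final: compute the liminf for each n ≥ 1
  intro n _hn
  unfold HasLogDilation logDilation
  -- u_n along the ray tends to n L
  have hsum : Tendsto (fun j : ℕ => dist (γ (j:ℝ)) p - dist (f^[n] (γ (j:ℝ))) p)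
      atTop (nhds ((n:ℝ) * L)) := by
    have h1 : ∀ j : ℕ, dist (γ (j:ℝ)) p - dist (f^[n] (γ (j:ℝ))) p
        = ∑ k ∈ Finset.range n,
          (dist (f^[k] (γ (j:ℝ))) p - dist (f (f^[k] (γ (j:ℝ)))) p) :=
      fun j => htel n _
    simp only [h1]
    have h2 : Tendsto (fun j : ℕ => ∑ k ∈ Finset.range n,
        (dist (f^[k] (γ (j:ℝ))) p - dist (f (f^[k] (γ (j:ℝ)))) p)) atTop
        (nhds (∑ _k ∈ Finset.range n, L)) :=
      tendsto_finset_sum _ (fun k _ => (hC k).2.2)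
    simpa [Finset.sum_const, Finset.card_range, nsmul_eq_mul] using h2
  have hupper : liminf (fun x => ((dist x p - dist (f^[n] x) p : ℝ) : EReal)) F
      ≤ (((n:ℝ) * L : ℝ) : EReal) := by
    refine liminf_le_of_frequently_le (frequently_iff.mpr fun {U} hU => ?_)
    rw [hF, gromovFilter_eq hray, Filter.mem_comap] at hU
    obtain ⟨tset, htset, hsub⟩ := hU
    obtain ⟨M, hM⟩ := mem_atTop_sets.1 htset
    refine ⟨γ (max M 0), hsub (by
      show phi γ (γ (max M 0)) ∈ tset
      rw [phi_ray hray (le_max_right M 0)]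
      exact hM _ (le_max_left M 0)), ?_⟩
    have h1 := hmaster n (γ (max M 0))
    have h2 : psi γ (γ (max M 0)) = 0 := psi_ray hray (le_max_right M 0)
    have h3 := psi_nonneg hray (f^[n] (γ (max M 0)))
    exact_mod_cast (by linarith :
      dist (γ (max M 0)) p - dist (f^[n] (γ (max M 0))) p ≤ (n:ℝ) * L)
  have hlower : (((n:ℝ) * L : ℝ) : EReal)
      ≤ liminf (fun x => ((dist x p - dist (f^[n] x) p : ℝ) : EReal)) F := by
    by_contra hcon
    push_neg at hcon
    obtain ⟨c, hc1, hc2⟩ := EReal.lt_iff_exists_real_btwn.1 hcon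
    have hcR : c < (n:ℝ) * L := by exact_mod_cast hc2
    set ε : ℝ := (n:ℝ) * L - c with hε_def
    have hε : (0:ℝ) < ε := by simp only [hε_def]; linarith
    have hev1 : ∀ᶠ j : ℕ in atTop,
        (n:ℝ) * L - ε/2 < dist (γ (j:ℝ)) p - dist (f^[n] (γ (j:ℝ))) p := by
      have := Metric.tendsto_nhds.1 hsum (ε/2) (by positivity)
      filter_upwards [this] with j hj
      rw [Real.dist_eq, abs_lt] at hj
      linarith [hj.1]
    obtain ⟨j₀, hj₀⟩ := hev1.exists
    set t : ℝ := (j₀ : ℝ) with ht_def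
    have hF3' : Tendsto (fun x : X => dist x (γ t) - dist x p) F (nhds (-t)) := by
      rw [Filter.tendsto_iff_seq_tendsto]
      intro z hz
      have h7 := limit_of_tendsto hray hequiv z hz (γ t)
      rw [bus_ray hray (Nat.cast_nonneg j₀)] at h7
      exact h7
    have hev2 : ∀ᶠ x in F, dist x (γ t) - dist x p < -t + ε/2 :=
      hF3'.eventually (eventually_lt_nhds (by linarith))
    have hev3 : ∀ᶠ x in F, (((n:ℝ) * L - ε : ℝ) : EReal)
        ≤ ((dist x p - dist (f^[n] x) p : ℝ) : EReal) := by
      filter_upwards [hev2] with x hx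
      have hd1 : dist (f^[n] x) p ≤ dist x (γ t) + dist (f^[n] (γ t)) p := by
        have h8 := dist_triangle (f^[n] x) (f^[n] (γ t)) p
        have h9 := hfn n x (γ t)
        linarith
      have hdt : dist (γ t) p = t := by
        rw [hp, dist_comm]; exact ray_dist0 hray (Nat.cast_nonneg j₀)
      have h10 : (n:ℝ) * L - ε ≤ dist x p - dist (f^[n] x) p := by
        have hj := hj₀
        linarith
      exact_mod_cast h10
    have h11 := le_liminf_of_le (by isBoundedDefault) hev3
    have hceq : ((n:ℝ) * L - ε : ℝ) = c := by simp only [hε_def]; ring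
    rw [hceq] at h11
    exact absurd hc1 (not_lt.2 h11)
  exact le_antisymm hupper hlower
end
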